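/- arXiv:1305.1075 — 6 statements merged into one kernel-verified Lean document; each statement's English description precedes it below -/
import Mathlib

section
/- Let p be a prime, n ≥ 1 an integer, and 0 ≤ i ≤ n. Then the left coset space H_i\GL_n(ℤ) is finite and its cardinality equals g_p(n,i), i.e. |H_i\GL_n(ℤ)| = ∏_{a=1}^{i} (p^{n−a+1}−1)/(p^a−1). -/
open Matrix

noncomputable section

/-- The diagonal entries (as rationals) of the matrix
`δ_{i,j} = diag(1_i, p·1_{j−i}, p²·1_{n−j})`. -/
def deltaEntry (p i j : ℕ) (a : ℕ) : ℚ :=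
  if a < i then 1 else if a < j then (p : ℚ) else (p : ℚ) ^ 2

lemma deltaEntry_ne_zero {p : ℕ} (hp : p.Prime) (i j a : ℕ) :
    deltaEntry p i j a ≠ 0 := by
  have : (p : ℚ) ≠ 0 := Nat.cast_ne_zero.mpr hp.ne_zero
  unfold deltaEntry
  split_ifs <;> simp [this]

/-- `δ_{i,j}` as a unit (invertible element) of the ring of rational `n × n` matrices. -/
def deltaU (p : ℕ) (hp : p.Prime) (n i j : ℕ) : (Matrix (Fin n) (Fin n) ℚ)ˣ where
  val := Matrix.diagonal fun a : Fin n => deltaEntry p i j (a : ℕ)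
  inv := Matrix.diagonal fun a : Fin n => (deltaEntry p i j (a : ℕ))⁻¹
  val_inv := by
    rw [Matrix.diagonal_mul_diagonal]
    have h : (fun a : Fin n => deltaEntry p i j (a : ℕ) * (deltaEntry p i j (a : ℕ))⁻¹)
        = fun _ => 1 := funext fun a => mul_inv_cancel₀ (deltaEntry_ne_zero hp i j a)
    rw [h, Matrix.diagonal_one]
  inv_val := by
    rw [Matrix.diagonal_mul_diagonal]
    have h : (fun a : Fin n => (deltaEntry p i j (a : ℕ))⁻¹ * deltaEntry p i j (a : ℕ))
        = fun _ => 1 := funext fun a => inv_mul_cancel₀ (deltaEntry_ne_zero hp i j a)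
    rw [h, Matrix.diagonal_one]

/-- The canonical embedding `GL_n(ℤ) → GL_n(ℚ)`. -/
def glMap (n : ℕ) : (Matrix (Fin n) (Fin n) ℤ)ˣ →* (Matrix (Fin n) (Fin n) ℚ)ˣ :=
  Units.map ((Int.castRingHom ℚ).mapMatrix).toMonoidHom

/-- The subgroup `H_{i,j} = δ_{i,j} GL_n(ℤ) δ_{i,j}⁻¹ ∩ GL_n(ℤ)` of `GL_n(ℤ)`
(identifying `GL_n(ℤ)` with its image in `GL_n(ℚ)`). -/
def Hij (p : ℕ) (hp : p.Prime) (n i j : ℕ) : Subgroup (Matrix (Fin n) (Fin n) ℤ)ˣ :=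
  Subgroup.comap (glMap n)
    (Subgroup.map (MulAut.conj (deltaU p hp n i j)).toMonoidHom (glMap n).range)

/-- The left coset space `H\G`, i.e. the set of right cosets `H·A`. -/
def cosetSpace {G : Type*} [Group G] (H : Subgroup G) : Type _ :=
  Quotient (QuotientGroup.rightRel H)

/-- `g_p(n,i) = ∏_{a=1}^{i} (p^{n−a+1}−1)/(p^a−1)` for `1 ≤ i ≤ n`, `1` for `i = 0`,
and `0` otherwise. -/
def gaussCoeff (p n i : ℕ) : ℚ :=
  if i = 0 then 1
  else if 1 ≤ i ∧ i ≤ n then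
    ∏ a ∈ Finset.Icc 1 i, ((p : ℚ) ^ (n - a + 1) - 1) / ((p : ℚ) ^ a - 1)
  else 0

/-!
Conjugating by `δ_i` divides the lower-left `(n-i) × i` block of a matrix by `p`, so `H_i` is the
stabiliser of the coordinate subspace `E_i = ⟨e_1, …, e_i⟩ ⊆ 𝔽_p^n` for the action of `GL_n(ℤ)`
through reduction mod `p`. This action is transitive on `i`-dimensional subspaces: transvections
lift to `GL_n(ℤ)`, and together with diagonal matrices (which fix `E_i`) they generate
`GL_n(𝔽_p)`. By orbit–stabiliser, `|H_i\GL_n(ℤ)|` is the number of `i`-dimensional subspaces of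
`𝔽_p^n`, and counting linearly independent `i`-tuples of vectors gives the Gaussian binomial.
-/

open Module MulAction
open scoped Pointwise

namespace Matrix

variable {ι R K : Type*} [DecidableEq ι] [CommRing R] [Field K]

lemma transvection_map {S : Type*} [CommRing S] (f : R →+* S) (a b : ι) (c : R) :
    (transvection a b c).map f = transvection a b (f c) := by
  rw [transvection, transvection, Matrix.map_add _ (map_add f),
    Matrix.map_one f f.map_zero f.map_one, map_single _ _ _ f]

lemma exists_map_eq_iff {m n α β : Type*} {f : α → β} {M : Matrix m n β} :
    (∃ Y : Matrix m n α, Y.map f = M) ↔ ∀ a b, M a b ∈ Set.range f :=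
  ⟨by rintro ⟨Y, rfl⟩ a b; exact ⟨Y a b, rfl⟩,
    fun h => ⟨of fun a b => (h a b).choose, ext fun a b => (h a b).choose_spec⟩⟩

variable [Fintype ι]

lemma diagonal_mul_transvection_mul_diagonal_inv (D : ι → Kˣ) (a b : ι) (c : K) :
    diagonal (fun x => (D x : K)) * transvection a b c *
        diagonal (fun x => (((D x)⁻¹ : Kˣ) : K)) =
      transvection a b (D a * c * (D b)⁻¹) := by
  ext x y
  by_cases hxy : x = y <;>
    simp only [transvection, Units.val_inv_eq_inv_val, mul_diagonal, diagonal_mul, add_apply,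
      one_apply_eq, one_apply_ne, ne_eq, hxy, not_false_eq_true, single_apply, zero_add, mul_ite,
      mul_zero, ite_mul, zero_mul] <;>
    split_ifs <;> simp_all [mul_add, add_mul]

theorem exists_map_eq_mul_diagonal {f : R →+* K} (hf : Function.Surjective f)
    (M : Matrix ι ι K) (hM : M.det ≠ 0) :
    ∃ (A : GL ι R) (D : ι → Kˣ), (A : Matrix ι ι R).map f = M * diagonal fun a => (D a : K) := by
  -- Diagonal matrices normalise the transvections, so a diagonal factor can be carried along.
  let P : Matrix ι ι K → Prop := fun M => ∀ D : ι → Kˣ, ∃ (A : GL ι R) (D' : ι → Kˣ),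
    (A : Matrix ι ι R).map f = diagonal (fun a => (D a : K)) * M * diagonal fun a => (D' a : K)
  suffices h : P M by simpa using h 1
  refine diagonal_transvection_induction_of_det_ne_zero P M hM ?_ ?_ ?_
  · intro d hd D
    have hd0 : ∀ a, d a ≠ 0 := by simpa [Finset.prod_ne_zero_iff] using hd
    refine ⟨1, fun a => (D a * Units.mk0 _ (hd0 a))⁻¹, ?_⟩
    rw [GeneralLinearGroup.coe_one, Matrix.map_one _ f.map_zero f.map_one, diagonal_mul_diagonal,
      diagonal_mul_diagonal, ← diagonal_one]
    exact congrArg diagonal (funext fun a => (Units.mul_inv (D a * Units.mk0 _ (hd0 a))).symm)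
  · rintro ⟨a, b, hab, c⟩ D
    obtain ⟨x, hx⟩ := hf (D a * c * (D b)⁻¹)
    refine ⟨SpecialLinearGroup.toGL ⟨transvection a b x, det_transvection_of_ne a b hab x⟩,
      fun y => (D y)⁻¹, ?_⟩
    rw [TransvectionStruct.toMatrix_mk, diagonal_mul_transvection_mul_diagonal_inv, ← hx]
    exact transvection_map f a b x
  · intro A B _ _ hA hB D
    obtain ⟨A₁, D₁, h₁⟩ := hA D
    obtain ⟨B₁, D₂, h₂⟩ := hB fun a => (D₁ a)⁻¹
    have hD₁ :
        (diagonal fun a => (D₁ a : K)) * (diagonal fun a => (((D₁ a)⁻¹ : Kˣ) : K)) = 1 := by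
      simp [diagonal_mul_diagonal]
    refine ⟨A₁ * B₁, D₂, ?_⟩
    rw [GeneralLinearGroup.coe_mul, Matrix.map_mul, h₁, h₂]
    calc _ = diagonal (fun a => (D a : K)) * A *
          ((diagonal fun a => (D₁ a : K)) * (diagonal fun a => (((D₁ a)⁻¹ : Kˣ) : K))) * B *
          diagonal fun a => (D₂ a : K) := by simp only [Matrix.mul_assoc]
      _ = _ := by rw [hD₁, Matrix.mul_one, Matrix.mul_assoc _ A B]

lemma GeneralLinearGroup.mem_comap_map_conj_range_iff {S : Type*} [CommRing S]
    {f : R →+* S} (hf : Function.Injective f) (δ : GL ι S) (X : GL ι R) :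
    X ∈ ((map f).range.map (MulAut.conj δ).toMonoidHom).comap (map f) ↔
      ∃ Y : Matrix ι ι R, Y.map f = (δ⁻¹ : GL ι S) * (X : Matrix ι ι R).map f * δ := by
  constructor
  · rintro ⟨_, ⟨Y, rfl⟩, hY⟩
    have hconj : map f Y = δ⁻¹ * map f X * δ := by
      rw [← hY]
      simp [mul_assoc]
    exact ⟨Y, congrArg Units.val hconj⟩
  · rintro ⟨Y, hY⟩
    have hdet : f Y.det = f (X : Matrix ι ι R).det := by
      rw [RingHom.map_det, RingHom.mapMatrix_apply, hY, det_mul, det_mul, RingHom.map_det,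
        RingHom.mapMatrix_apply, mul_comm, ← mul_assoc, ← det_mul]
      simp
    have hYu : IsUnit Y := (isUnit_iff_isUnit_det Y).mpr (hf hdet ▸ X.isUnit.map detMonoidHom)
    have hconj : map f hYu.unit = δ⁻¹ * map f X * δ := Units.ext hY
    refine ⟨map f hYu.unit, ⟨hYu.unit, rfl⟩, ?_⟩
    rw [MulEquiv.coe_toMonoidHom, MulAut.conj_apply, hconj]
    group

end Matrix

open Matrix

section Subspaces

variable {K V : Type*} [Field K] [AddCommGroup V] [Module K V]

theorem Submodule.exists_linearEquiv_map_eq [FiniteDimensional K V] {U W : Submodule K V}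
    (h : finrank K U = finrank K W) :
    ∃ e : V ≃ₗ[K] V, U.map (e : V →ₗ[K] V) = W := by
  obtain ⟨U', hU⟩ := U.exists_isCompl
  obtain ⟨W', hW⟩ := W.exists_isCompl
  have h' : finrank K U' = finrank K W' := by
    have := Submodule.finrank_add_eq_of_isCompl hU
    have := Submodule.finrank_add_eq_of_isCompl hW
    omega
  let e := (U.prodEquivOfIsCompl U' hU).symm ≪≫ₗ
    ((LinearEquiv.ofFinrankEq U W h).prodCongr (LinearEquiv.ofFinrankEq U' W' h')) ≪≫ₗ
    W.prodEquivOfIsCompl W' hW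
  refine ⟨e, Submodule.eq_of_le_of_finrank_eq ?_ (by rw [LinearEquiv.finrank_map_eq, h])⟩
  rintro _ ⟨u, hu, rfl⟩
  simp [e, Submodule.prodEquivOfIsCompl_symm_apply_left U U' hU ⟨u, hu⟩]

lemma Submodule.span_range_subtype_comp_eq {W : Submodule K V} [FiniteDimensional K W] {k : ℕ}
    (hW : finrank K W = k) {t : Fin k → W} (ht : LinearIndependent K t) :
    Submodule.span K (Set.range (W.subtype ∘ t)) = W := by
  rw [Set.range_comp, ← Submodule.map_span,
    ht.span_eq_top_of_card_eq_finrank' (by rw [Fintype.card_fin, hW]), Submodule.map_subtype_top]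

def linearIndependentFiberEquiv {k : ℕ} (W : {W : Submodule K V // finrank K W = k})
    [FiniteDimensional K W.1] :
    {s : {s : Fin k → V // LinearIndependent K s} //
        Submodule.span K (Set.range s.1) = W.1} ≃ {t : Fin k → W.1 // LinearIndependent K t} where
  toFun s := ⟨fun j => ⟨s.1.1 j, s.2.le (Submodule.subset_span (Set.mem_range_self j))⟩,
    LinearIndependent.of_comp W.1.subtype s.1.2⟩
  invFun t := ⟨⟨W.1.subtype ∘ t.1, t.2.map' _ (Submodule.ker_subtype _)⟩,
    Submodule.span_range_subtype_comp_eq W.2 t.2⟩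
  left_inv _ := rfl
  right_inv _ := rfl

theorem card_submodule_finrank_eq_mul [Fintype K] [Finite V] {k : ℕ} (hk : k ≤ finrank K V) :
    Nat.card {W : Submodule K V // finrank K W = k} *
        ∏ a : Fin k, (Fintype.card K ^ k - Fintype.card K ^ (a : ℕ)) =
      ∏ a : Fin k, (Fintype.card K ^ finrank K V - Fintype.card K ^ (a : ℕ)) := by
  classical
  have : Finite (Submodule K V) := Finite.of_injective _ SetLike.coe_injective
  let span : {s : Fin k → V // LinearIndependent K s} → {W : Submodule K V // finrank K W = k} :=
    fun s => ⟨Submodule.span K (Set.range s.1), by rw [finrank_span_eq_card s.2, Fintype.card_fin]⟩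
  have hfiber (W : {W : Submodule K V // finrank K W = k}) :
      Nat.card {s // span s = W} =
        ∏ a : Fin k, (Fintype.card K ^ k - Fintype.card K ^ (a : ℕ)) := by
    rw [Nat.card_congr ((Equiv.subtypeEquivRight fun s => Subtype.ext_iff).trans
      (linearIndependentFiberEquiv W)), card_linearIndependent W.2.ge, W.2]
  have := Fintype.ofFinite {W : Submodule K V // finrank K W = k}
  rw [← card_linearIndependent hk, ← Nat.card_congr (Equiv.sigmaFiberEquiv span), Nat.card_sigma,
    Finset.sum_congr rfl fun W _ => hfiber W, Finset.sum_const, Finset.card_univ, smul_eq_mul,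
    Nat.card_eq_fintype_card]

end Subspaces

section CoordSubspace

variable {ι R K : Type*} [Fintype ι] [CommRing R] [Field K]

variable (K) in
def coordSubspace (s : Finset ι) : Submodule K (ι → K) :=
  Submodule.span K (Pi.basisFun K ι '' s)

lemma mem_coordSubspace {s : Finset ι} {v : ι → K} : v ∈ coordSubspace K s ↔ ∀ a ∉ s, v a = 0 := by
  simp only [coordSubspace, Basis.mem_span_image, Set.subset_def, Finset.mem_coe,
    Finsupp.mem_support_iff, Pi.basisFun_repr]
  exact forall_congr' fun a => not_imp_comm

lemma finrank_coordSubspace (s : Finset ι) : finrank K (coordSubspace K s) = s.card := by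
  rw [coordSubspace, Set.image_eq_range, finrank_span_eq_card]
  · simp
  · exact (Pi.basisFun K ι).linearIndependent.comp _ Subtype.val_injective

variable [DecidableEq ι]

lemma finrank_map_mulVecLin {M : Matrix ι ι K} (hM : IsUnit M) (W : Submodule K (ι → K)) :
    finrank K (W.map M.mulVecLin) = finrank K W :=
  (Submodule.equivMapOfInjective _ (mulVec_injective_iff_isUnit.mpr hM) W).finrank_eq.symm

lemma map_mulVecLin_coordSubspace_eq_iff {M : Matrix ι ι K} (hM : IsUnit M) (s : Finset ι) :
    (coordSubspace K s).map M.mulVecLin = coordSubspace K s ↔ ∀ a ∉ s, ∀ b ∈ s, M a b = 0 := by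
  constructor
  · intro h a ha b hb
    have hcol : M *ᵥ Pi.single b 1 ∈ coordSubspace K s := h ▸ Submodule.mem_map_of_mem
      (mem_coordSubspace.mpr fun c hc => Pi.single_eq_of_ne (ne_of_mem_of_not_mem hb hc).symm 1)
    simpa [mulVec_single_one] using mem_coordSubspace.mp hcol a ha
  · intro h
    refine Submodule.eq_of_le_of_finrank_eq ?_ (finrank_map_mulVecLin hM _)
    rintro _ ⟨v, hv, rfl⟩
    refine mem_coordSubspace.mpr fun a ha => Finset.sum_eq_zero fun b _ => ?_
    by_cases hb : b ∈ s
    · simp [h a ha b hb]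
    · simp [mem_coordSubspace.mp hv b hb]

variable (ι R K) [Algebra R K]

instance Matrix.GeneralLinearGroup.submoduleMulAction : MulAction (GL ι R) (Submodule K (ι → K)) :=
  MulAction.compHom _
    (GeneralLinearGroup.toLin.toMonoidHom.comp (GeneralLinearGroup.map (algebraMap R K)))

variable {ι R K}

lemma Matrix.GeneralLinearGroup.smul_submodule_def (A : GL ι R) (W : Submodule K (ι → K)) :
    A • W = W.map (GeneralLinearGroup.map (algebraMap R K) A : Matrix ι ι K).mulVecLin :=
  rfl

theorem orbit_coordSubspace (hf : Function.Surjective (algebraMap R K)) (s : Finset ι) :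
    orbit (GL ι R) (coordSubspace K s) = {W : Submodule K (ι → K) | finrank K W = s.card} := by
  ext W
  rw [mem_orbit_iff]
  constructor
  · rintro ⟨A, rfl⟩
    rw [Set.mem_ofPred_eq, GeneralLinearGroup.smul_submodule_def,
      finrank_map_mulVecLin (Units.isUnit _), finrank_coordSubspace]
  · intro (hW : finrank K W = s.card)
    have hrank : finrank K (coordSubspace K s) = finrank K W :=
      (finrank_coordSubspace s).trans hW.symm
    obtain ⟨e, he⟩ := Submodule.exists_linearEquiv_map_eq hrank
    have he_det : (LinearMap.toMatrix' (e : (ι → K) →ₗ[K] ι → K)).det ≠ 0 := by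
      rw [LinearMap.det_toMatrix']
      exact (LinearEquiv.isUnit_det' e).ne_zero
    obtain ⟨A, D, hA⟩ := exists_map_eq_mul_diagonal hf _ he_det
    have hD : IsUnit (diagonal fun a => (D a : K)) :=
      isUnit_diagonal.mpr (Pi.isUnit_iff.mpr fun a => (D a).isUnit)
    refine ⟨A, ?_⟩
    rw [GeneralLinearGroup.smul_submodule_def, ← he]
    change (coordSubspace K s).map ((A : Matrix ι ι R).map (algebraMap R K)).mulVecLin = _
    rw [hA, mulVecLin_mul, Submodule.map_comp, (map_mulVecLin_coordSubspace_eq_iff hD s).mpr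
      fun a ha b hb => diagonal_apply_ne _ (ne_of_mem_of_not_mem hb ha).symm,
      ← toLin'_apply', toLin'_toMatrix']

theorem mem_stabilizer_coordSubspace_iff (s : Finset ι) (A : GL ι R) :
    A ∈ stabilizer (GL ι R) (coordSubspace K s) ↔
      ∀ a ∉ s, ∀ b ∈ s, algebraMap R K (A a b) = 0 := by
  rw [mem_stabilizer_iff, GeneralLinearGroup.smul_submodule_def,
    map_mulVecLin_coordSubspace_eq_iff (Units.isUnit _)]
  simp only [GeneralLinearGroup.map_apply]

end CoordSubspace

lemma deltaEntry_of_lt (p : ℕ) {i n a : ℕ} (ha : a < n) :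
    deltaEntry p i n a = if a < i then 1 else (p : ℚ) := by
  simp [deltaEntry, ha]

lemma intCast_div_mem_range_iff {x : ℤ} {p : ℕ} (hp : p ≠ 0) :
    (x : ℚ) / p ∈ Set.range (Int.cast : ℤ → ℚ) ↔ (p : ℤ) ∣ x := by
  have hp' : (p : ℚ) ≠ 0 := by exact_mod_cast hp
  constructor
  · rintro ⟨y, hy⟩
    refine ⟨y, ?_⟩
    rw [eq_div_iff hp', mul_comm] at hy
    exact_mod_cast hy.symm
  · rintro ⟨y, rfl⟩
    exact ⟨y, by push_cast; field_simp⟩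

theorem mem_Hij_iff {p : ℕ} (hp : p.Prime) (n i : ℕ) (X : GL (Fin n) ℤ) :
    X ∈ Hij p hp n i n ↔ ∀ a b : Fin n, (b : ℕ) < i → i ≤ (a : ℕ) → (p : ℤ) ∣ X a b := by
  change X ∈ ((GeneralLinearGroup.map (Int.castRingHom ℚ)).range.map
      (MulAut.conj (deltaU p hp n i n)).toMonoidHom).comap (GeneralLinearGroup.map _) ↔ _
  rw [GeneralLinearGroup.mem_comap_map_conj_range_iff Int.cast_injective, exists_map_eq_iff]
  refine forall_congr' fun a => forall_congr' fun b => ?_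
  change ((diagonal fun a : Fin n => (deltaEntry p i n a)⁻¹) * (X : Matrix (Fin n) (Fin n) ℤ).map
    (Int.castRingHom ℚ) * diagonal fun a : Fin n => deltaEntry p i n a) a b ∈ _ ↔ _
  rw [mul_diagonal, diagonal_mul, deltaEntry_of_lt p a.2, deltaEntry_of_lt p b.2, map_apply,
    Int.coe_castRingHom]
  have hp' : (p : ℚ) ≠ 0 := by exact_mod_cast hp.ne_zero
  by_cases ha : (a : ℕ) < i <;> by_cases hb : (b : ℕ) < i
  · simp [ha, hb]
  · simp only [ha, hb, if_true, if_false, inv_one, one_mul]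
    exact iff_of_true ⟨X a b * p, by push_cast; rfl⟩ fun _ h => absurd ha (not_lt.mpr h)
  · simp only [ha, hb, if_true, if_false, mul_one, not_lt.mp ha, forall_const, ← div_eq_inv_mul]
    exact intCast_div_mem_range_iff hp.ne_zero
  · simp only [ha, hb, if_false]
    exact iff_of_true ⟨X a b, by field_simp⟩ (by simp)

section GaussianBinomial

open Finset

lemma cast_prod_pow_sub_pow {q : ℕ} (hq : 0 < q) {k m : ℕ} (hkm : k ≤ m) :
    ((∏ a : Fin k, (q ^ m - q ^ (a : ℕ)) : ℕ) : ℚ) =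
      (∏ a ∈ range k, (q : ℚ) ^ a) * ∏ a ∈ range k, ((q : ℚ) ^ (m - a) - 1) := by
  rw [Nat.cast_prod, Fin.prod_univ_eq_prod_range (fun a => ((q ^ m - q ^ a : ℕ) : ℚ)),
    ← prod_mul_distrib]
  refine prod_congr rfl fun a ha => ?_
  have ham : a ≤ m := (mem_range.mp ha).le.trans hkm
  rw [Nat.cast_sub (Nat.pow_le_pow_right hq ham), mul_sub, mul_one, ← pow_add,
    Nat.add_sub_cancel' ham]
  push_cast
  rfl

lemma gaussCoeff_eq_prod_range (p : ℕ) {n i : ℕ} (hi : i ≤ n) :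
    gaussCoeff p n i = ∏ a ∈ range i, ((p : ℚ) ^ (n - a) - 1) / ((p : ℚ) ^ (a + 1) - 1) := by
  have hIcc : ∏ a ∈ Icc 1 i, ((p : ℚ) ^ (n - a + 1) - 1) / ((p : ℚ) ^ a - 1) =
      ∏ a ∈ range i, ((p : ℚ) ^ (n - a) - 1) / ((p : ℚ) ^ (a + 1) - 1) := by
    rw [← Ico_add_one_right_eq_Icc, prod_Ico_eq_prod_range, Nat.add_sub_cancel]
    refine prod_congr rfl fun a ha => ?_
    rw [mem_range] at ha
    rw [add_comm 1 a, show n - (a + 1) + 1 = n - a by omega]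
  rcases Nat.eq_zero_or_pos i with rfl | hi0
  · simp [gaussCoeff]
  · rw [gaussCoeff, if_neg hi0.ne', if_pos ⟨hi0, hi⟩, hIcc]

theorem natCast_eq_gaussCoeff {q n i N : ℕ} (hq : 1 < q) (hi : i ≤ n)
    (h : N * ∏ a : Fin i, (q ^ i - q ^ (a : ℕ)) = ∏ a : Fin i, (q ^ n - q ^ (a : ℕ))) :
    (N : ℚ) = gaussCoeff q n i := by
  have hq' : (1 : ℚ) < q := by exact_mod_cast hq
  have hpow : (∏ a ∈ range i, (q : ℚ) ^ a) ≠ 0 := prod_ne_zero_iff.mpr fun a _ => by positivity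
  have hden : ∏ a ∈ range i, ((q : ℚ) ^ (a + 1) - 1) ≠ 0 :=
    prod_ne_zero_iff.mpr fun a _ => sub_ne_zero.mpr (one_lt_pow₀ hq' a.succ_ne_zero).ne'
  have hreflect :
      ∏ a ∈ range i, ((q : ℚ) ^ (i - a) - 1) = ∏ a ∈ range i, ((q : ℚ) ^ (a + 1) - 1) := by
    rw [← prod_range_reflect (fun a => (q : ℚ) ^ (a + 1) - 1)]
    refine prod_congr rfl fun a ha => ?_
    rw [mem_range] at ha
    rw [show i - 1 - a + 1 = i - a by omega]
  have hcast := congrArg (Nat.cast : ℕ → ℚ) h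
  rw [Nat.cast_mul, cast_prod_pow_sub_pow (by omega) le_rfl,
    cast_prod_pow_sub_pow (by omega) hi, hreflect, mul_left_comm, mul_right_inj' hpow] at hcast
  rw [gaussCoeff_eq_prod_range q hi, prod_div_distrib, eq_div_iff hden, hcast]

end GaussianBinomial

theorem Hij_eq_stabilizer {p : ℕ} [Fact p.Prime] (hp : p.Prime) (n i : ℕ) :
    Hij p hp n i n =
      stabilizer (GL (Fin n) ℤ) (coordSubspace (ZMod p) {a : Fin n | (a : ℕ) < i}) := by
  ext X
  rw [mem_Hij_iff, mem_stabilizer_coordSubspace_iff]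
  simp only [Finset.mem_filter, Finset.mem_univ, true_and, not_lt, algebraMap_int_eq,
    eq_intCast, ZMod.intCast_zmod_eq_zero_iff_dvd]
  exact forall_congr' fun a => ⟨fun h ha b hb => h b hb ha, fun h b hb ha => h ha b hb⟩

theorem statement0_general (p n i : ℕ) (hp : p.Prime) (hi : i ≤ n) :
    Finite (cosetSpace (Hij p hp n i n)) ∧
      (Nat.card (cosetSpace (Hij p hp n i n)) : ℚ) = gaussCoeff p n i := by
  have : Fact p.Prime := ⟨hp⟩
  have hcard : Nat.card (cosetSpace (Hij p hp n i n)) =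
      Nat.card {W : Submodule (ZMod p) (Fin n → ZMod p) // finrank (ZMod p) W = i} := by
    rw [cosetSpace, Nat.card_congr (QuotientGroup.quotientRightRelEquivQuotientLeftRel _),
      ← Subgroup.index, Hij_eq_stabilizer, index_stabilizer,
      orbit_coordSubspace (ZMod.intCast_surjective (n := p)), Fin.card_filter_val_lt,
      min_eq_right hi]
    rfl
  have hcount := card_submodule_finrank_eq_mul (K := ZMod p) (V := Fin n → ZMod p) (k := i)
    (by rwa [finrank_fin_fun])
  rw [ZMod.card, finrank_fin_fun] at hcount
  have hpos : 0 < ∏ a : Fin i, (p ^ n - p ^ (a : ℕ)) := Finset.prod_pos fun a _ =>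
    Nat.sub_pos_of_lt (Nat.pow_lt_pow_right hp.one_lt (a.2.trans_le hi))
  refine ⟨(Nat.card_ne_zero.mp fun h0 => ?_).2, hcard ▸ natCast_eq_gaussCoeff hp.one_lt hi hcount⟩
  rw [← hcard, h0, zero_mul] at hcount
  omega

/-- for a prime `p`, `n ≥ 1` and `0 ≤ i ≤ n`, the left coset space
`H_i\GL_n(ℤ)` (with `H_i = H_{i,n}`, i.e. `δ_i = diag(1_i, p·1_{n−i})`) is finite and its
cardinality equals `g_p(n,i)`. -/
theorem statement0 (p n i : ℕ) (hp : p.Prime) (hn : 1 ≤ n) (hi : i ≤ n) :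
    Finite (cosetSpace (Hij p hp n i n)) ∧
      (Nat.card (cosetSpace (Hij p hp n i n)) : ℚ) = gaussCoeff p n i :=
  statement0_general p n i hp hi
end
end

section
/- Let p be a prime, n ≥ 1, 0 ≤ i ≤ j ≤ n, and λ ∈ ℤ^n. Write N(λ) for the number of left cosets H_{i,j}A in H_{i,j}\GL_n(ℤ) such that λ ∈ ᵗA L_0 (this condition depends only on the coset of A). Let g denote the greatest common divisor of the entries of λ (with g = 0 when λ = 0). Then N(λ) = |H_{i,j}\S_{i,j}| if p does not divide g; N(λ) = |H_{i,j}\S_i| if p divides g but p² does not divide g; and N(λ) = |H_{i,j}\GL_n(ℤ)| if p² divides g. -/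
/-!
Write `λ = g • ν` with `ν` primitive and complete `ν` to a matrix `U ∈ GL_n(ℤ)` whose last row
is `ν`. Then `λ ∈ ᵗA L₀` iff `g • (ν A⁻¹) ∈ L₀`, and `ν A⁻¹` is the last row of `(A U⁻¹)⁻¹`;
right multiplication by `U⁻¹` permutes `H\GL_n(ℤ)`, so `N(λ)` counts the cosets of an `H`-stable
set described by the last row of the inverse. With `p ^ e b` the diagonal entries of `δ`, we have
`L₀ = {v | p ^ (2 - e b) ∣ v b}`, and `g • v` lies in it iff `v` lies in the analogous lattice with
exponent `2 - v_p(g)`: this is `S_{i,j}`, `S_i` or everything. The sets are `H`-stable because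
`h ∈ H` satisfies `p ^ (e a - e b) ∣ h a b`.
-/

open Matrix

noncomputable section

/-- The set `S_i ⊆ GL_n(ℤ)` of matrices `A` such that the first `i` entries of the last
row of `A⁻¹` are divisible by `p`. -/
def Sseti (p n i : ℕ) : Set (Matrix (Fin n) (Fin n) ℤ)ˣ :=
  {A | ∀ h : 0 < n, ∀ b : Fin n, (b : ℕ) < i →
    (p : ℤ) ∣ (A⁻¹).val ⟨n - 1, Nat.sub_lt h Nat.one_pos⟩ b}

/-- The set of left cosets `H·A` (elements of `H\G`) entirely contained in a set `S`. -/
def cosetsIn {G : Type*} [Group G] (H : Subgroup G) (S : Set G) : Set (cosetSpace H) :=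
  {c | ∀ A : G, Quotient.mk (QuotientGroup.rightRel H) A = c → A ∈ S}

/-- The set `S_{i,j} ⊆ GL_n(ℤ)` of matrices `A` such that, in the last row of `A⁻¹`, the
first `i` entries are divisible by `p²` and the following `j−i` entries are divisible
by `p`. -/
def Ssetij (p n i j : ℕ) : Set (Matrix (Fin n) (Fin n) ℤ)ˣ :=
  {A | ∀ h : 0 < n, ∀ b : Fin n,
    ((b : ℕ) < i → (p : ℤ) ^ 2 ∣ (A⁻¹).val ⟨n - 1, Nat.sub_lt h Nat.one_pos⟩ b) ∧
    (i ≤ (b : ℕ) → (b : ℕ) < j → (p : ℤ) ∣ (A⁻¹).val ⟨n - 1, Nat.sub_lt h Nat.one_pos⟩ b)}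

/-- The lattice `L_0 = (p²ℤ)^i × (pℤ)^{j−i} × ℤ^{n−j} ⊆ ℤ^n`. -/
def L0set (p n i j : ℕ) : Set (Fin n → ℤ) :=
  {v | ∀ b : Fin n, ((b : ℕ) < i → (p : ℤ) ^ 2 ∣ v b) ∧
    (i ≤ (b : ℕ) → (b : ℕ) < j → (p : ℤ) ∣ v b)}

/-- `N(λ)`: the number of left cosets `H_{i,j}·A` in `H_{i,j}\GL_n(ℤ)` such that
`λ ∈ ᵗA L_0`. -/
def Ncount (p : ℕ) (hp : p.Prime) (n i j : ℕ) (lam : Fin n → ℤ) : ℕ :=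
  Nat.card ↥{c : cosetSpace (Hij p hp n i j) |
    ∃ A : (Matrix (Fin n) (Fin n) ℤ)ˣ,
      Quotient.mk (QuotientGroup.rightRel (Hij p hp n i j)) A = c ∧
      ∃ μ ∈ L0set p n i j, (A.val)ᵀ *ᵥ μ = lam}

section LevelLattice

variable {ι R : Type*} [CommRing R] (q : R) (e : ι → ℕ)

def levelLattice (m : ℕ) : Set (ι → R) := {v | ∀ b, q ^ (m - e b) ∣ v b}

variable {q e} {m : ℕ}

lemma mem_levelLattice_of_forall_pow_dvd {v : ι → R} (hv : ∀ b, q ^ m ∣ v b) :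
    v ∈ levelLattice q e m :=
  fun b => (pow_dvd_pow q (Nat.sub_le m (e b))).trans (hv b)

lemma vecMul_mem_levelLattice [Fintype ι] {M : Matrix ι ι R}
    (hM : ∀ a b, q ^ (e a - e b) ∣ M a b) {v : ι → R} (hv : v ∈ levelLattice q e m) :
    v ᵥ* M ∈ levelLattice q e m := by
  intro b
  refine Finset.dvd_sum fun a _ => ?_
  have hexp : m - e b ≤ (m - e a) + (e a - e b) := by omega
  exact (pow_dvd_pow q hexp).trans (pow_add q _ _ ▸ mul_dvd_mul (hv a) (hM a b))

lemma pow_dvd_pow_mul_mul_iff [IsDomain R] (hq : Prime q) {d : R} (hd : ¬ q ∣ d)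
    (k s : ℕ) (x : R) : q ^ k ∣ q ^ s * d * x ↔ q ^ (k - s) ∣ x := by
  rcases le_total k s with hks | hsk
  · simp only [Nat.sub_eq_zero_of_le hks, pow_zero, one_dvd, iff_true]
    exact (pow_dvd_pow q hks).trans (mul_assoc (q ^ s) d x ▸ dvd_mul_right _ _)
  · rw [← Nat.sub_add_cancel hsk, pow_add, Nat.add_sub_cancel, mul_comm (q ^ (k - s)),
      mul_assoc, mul_dvd_mul_iff_left (pow_ne_zero s hq.ne_zero)]
    exact ⟨hq.pow_dvd_of_dvd_mul_left _ hd, fun h => h.mul_left d⟩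

lemma smul_mem_levelLattice_iff [IsDomain R] (hq : Prime q) {d : R} (hd : ¬ q ∣ d)
    (s : ℕ) (v : ι → R) :
    (q ^ s * d) • v ∈ levelLattice q e m ↔ v ∈ levelLattice q e (m - s) := by
  refine forall_congr' fun b => ?_
  rw [Pi.smul_apply, smul_eq_mul, pow_dvd_pow_mul_mul_iff hq hd, Nat.sub_right_comm]

end LevelLattice

lemma Ideal.span_range_eq_top_of_gcd_eq_one {R ι : Type*} [CommRing R] [IsPrincipalIdealRing R]
    [NormalizedGCDMonoid R] [Fintype ι] {ν : ι → R} (hν : Finset.univ.gcd ν = 1) :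
    Ideal.span (Set.range ν) = ⊤ := by
  obtain ⟨d, hd⟩ := (IsPrincipalIdealRing.principal (Ideal.span (Set.range ν))).principal
  change Ideal.span (Set.range ν) = Ideal.span {d} at hd
  have hdν : ∀ a, d ∣ ν a := fun a => Ideal.mem_span_singleton.1
    (hd ▸ Ideal.subset_span (Set.mem_range_self a))
  rw [hd, Ideal.span_singleton_eq_top]
  exact isUnit_of_dvd_one (hν ▸ Finset.dvd_gcd fun a _ => hdν a)

section UnimodularRow

variable {R ι : Type*} [CommRing R] [IsDomain R] [IsPrincipalIdealRing R] [Fintype ι]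

lemma Module.Basis.exists_basis_apply_eq_of_apply_eq_one {M : Type*} [AddCommGroup M] [Module R M]
    [DecidableEq ι] (b : Module.Basis ι R M) {f : M →ₗ[R] R} {v : M} (hv : f v = 1) (r : ι) :
    ∃ b' : Module.Basis ι R M, b' r = v := by
  obtain ⟨m, bK⟩ := Submodule.basisOfPid b (LinearMap.ker f)
  have hli : ∀ c : R, ∀ x ∈ LinearMap.ker f, c • v + x = 0 → c = 0 := fun c x hx h => by
    simpa [hv, LinearMap.mem_ker.1 hx] using congrArg f h
  have hsp : ∀ z : M, ∃ c : R, z + c • v ∈ LinearMap.ker f := fun z =>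
    ⟨-f z, by simp [hv]⟩
  let b₀ := Module.Basis.mkFinCons v bK hli hsp
  let e := b₀.indexEquiv b
  let σ := e.trans (Equiv.swap (e 0) r)
  have hσ : σ.symm r = 0 := σ.symm_apply_eq.2 (by simp [σ])
  exact ⟨b₀.reindex σ, by simp [hσ, b₀]⟩

lemma exists_unit_row_eq [DecidableEq ι] {ν : ι → R} (hν : Ideal.span (Set.range ν) = ⊤)
    (r : ι) : ∃ U : (Matrix ι ι R)ˣ, U.val r = ν := by
  obtain ⟨c, hc⟩ := (Submodule.mem_span_range_iff_exists_fun R).1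
    (hν ▸ Submodule.mem_top : (1 : R) ∈ Ideal.span (Set.range ν))
  obtain ⟨b, hb⟩ := (Pi.basisFun R ι).exists_basis_apply_eq_of_apply_eq_one
    (f := Fintype.linearCombination R c) (v := ν)
    (by simpa [Fintype.linearCombination_apply, mul_comm] using hc) r
  let _ := (Pi.basisFun R ι).invertibleToMatrix b
  refine ⟨unitOfInvertible ((Pi.basisFun R ι).toMatrix b)ᵀ, ?_⟩
  ext l
  simp [Module.Basis.toMatrix_apply, hb]

end UnimodularRow

section RightCosets

variable {G : Type*} [Group G] (H : Subgroup G)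

def QuotientGroup.rightRelMulRight (U : G) :
    Quotient (QuotientGroup.rightRel H) ≃ Quotient (QuotientGroup.rightRel H) :=
  Quotient.congr (Equiv.mulRight U) fun a b => by
    simp [QuotientGroup.rightRel_apply, mul_assoc]

lemma card_image_mk_preimage_mul_right (S : Set G) (U : G) :
    Nat.card (Quotient.mk (QuotientGroup.rightRel H) '' ((· * U) ⁻¹' S))
      = Nat.card (Quotient.mk (QuotientGroup.rightRel H) '' S) := by
  rw [← Set.image_mul_right', Set.image_image,
    show (fun A => Quotient.mk _ (A * U⁻¹)) = QuotientGroup.rightRelMulRight H U⁻¹ ∘ Quotient.mk _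
      from rfl, Set.image_comp]
  exact Nat.card_image_of_injective (Equiv.injective _) _

lemma cosetsIn_eq_image {T : Set G} (hT : ∀ h ∈ H, ∀ A ∈ T, h * A ∈ T) :
    cosetsIn H T = Quotient.mk (QuotientGroup.rightRel H) '' T := by
  ext c
  obtain ⟨A, rfl⟩ := Quotient.exists_rep c
  refine ⟨fun hc => ⟨A, hc A rfl, rfl⟩, ?_⟩
  rintro ⟨B, hB, hBA⟩ A' hA'
  have hrel : A' * B⁻¹ ∈ H := QuotientGroup.rightRel_apply.1 (Quotient.exact (hBA.trans hA'.symm))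
  simpa using hT _ hrel B hB

end RightCosets

lemma exists_transpose_mulVec_eq_iff {R ι : Type*} [CommRing R] [Fintype ι] [DecidableEq ι]
    (A : (Matrix ι ι R)ˣ) (L : Set (ι → R)) (lam : ι → R) :
    (∃ μ ∈ L, (A.val)ᵀ *ᵥ μ = lam) ↔ lam ᵥ* (A⁻¹).val ∈ L := by
  simp_rw [mulVec_transpose]
  constructor
  · rintro ⟨μ, hμ, rfl⟩
    rwa [vecMul_vecMul, ← Units.val_mul, mul_inv_cancel, Units.val_one, vecMul_one]
  · exact fun h => ⟨_, h, by
      rw [vecMul_vecMul, ← Units.val_mul, inv_mul_cancel, Units.val_one, vecMul_one]⟩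

lemma pos_of_not_dvd_gcd {α : Type*} [CommMonoidWithZero α] [NormalizedGCDMonoid α]
    {n : ℕ} {q : α} {f : Fin n → α} (h : ¬ q ∣ Finset.univ.gcd f) : 0 < n := by
  refine Nat.pos_of_ne_zero fun hn => h ?_
  subst hn
  simp

def deltaExp (i j a : ℕ) : ℕ := if a < i then 0 else if a < j then 1 else 2

lemma deltaEntry_eq_pow (p i j a : ℕ) : deltaEntry p i j a = (p : ℚ) ^ deltaExp i j a := by
  unfold deltaEntry deltaExp
  split_ifs <;> simp

def invRowSet {R : Type*} [CommRing R] {n : ℕ} (r : Fin n) (L : Set (Fin n → R)) :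
    Set (Matrix (Fin n) (Fin n) R)ˣ :=
  {A | (A⁻¹).val r ∈ L}

section CosetCount

variable {p n i j : ℕ} {hp : p.Prime}

lemma exists_mul_pow_eq_of_mem_Hij {A : (Matrix (Fin n) (Fin n) ℤ)ˣ} (hA : A ∈ Hij p hp n i j) :
    ∃ B : Matrix (Fin n) (Fin n) ℤ, ∀ a b : Fin n,
      (A.val a b : ℚ) * (p : ℚ) ^ deltaExp i j b = (p : ℚ) ^ deltaExp i j a * B a b := by
  obtain ⟨_, ⟨B, rfl⟩, hconj⟩ := hA
  refine ⟨B.val, fun a b => ?_⟩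
  have hcomm : glMap n A * deltaU p hp n i j = deltaU p hp n i j * glMap n B := by
    rw [← hconj]
    simp [MulAut.conj_apply]
  have hentry : ((glMap n A).val * (deltaU p hp n i j).val) a b
      = ((deltaU p hp n i j).val * (glMap n B).val) a b := by
    rw [← Units.val_mul, hcomm, Units.val_mul]
  simpa [deltaU, glMap, mul_diagonal, diagonal_mul, deltaEntry_eq_pow] using hentry

lemma pow_deltaExp_sub_dvd_of_mem_Hij {A : (Matrix (Fin n) (Fin n) ℤ)ˣ}
    (hA : A ∈ Hij p hp n i j) (a b : Fin n) :
    (p : ℤ) ^ (deltaExp i j a - deltaExp i j b) ∣ A.val a b := by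
  obtain ⟨B, hB⟩ := exists_mul_pow_eq_of_mem_Hij hA
  rcases le_total (deltaExp i j a) (deltaExp i j b) with hab | hba
  · simp [Nat.sub_eq_zero_of_le hab]
  · refine ⟨B a b, Int.cast_injective (α := ℚ) ?_⟩
    have hp0 : (p : ℚ) ^ deltaExp i j b ≠ 0 := pow_ne_zero _ (by exact_mod_cast hp.ne_zero)
    have h := hB a b
    rw [← Nat.sub_add_cancel hba, pow_add] at h
    push_cast
    exact mul_right_cancel₀ hp0 (h.trans (by ring))

lemma mul_mem_invRowSet_levelLattice {m : ℕ} (r : Fin n) {h A : (Matrix (Fin n) (Fin n) ℤ)ˣ}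
    (hh : h ∈ Hij p hp n i j)
    (hA : A ∈ invRowSet r (levelLattice (p : ℤ) (fun b : Fin n => deltaExp i j b) m)) :
    h * A ∈ invRowSet r (levelLattice (p : ℤ) (fun b : Fin n => deltaExp i j b) m) := by
  change ((h * A)⁻¹).val r ∈ levelLattice (p : ℤ) (fun b : Fin n => deltaExp i j b) m
  rw [_root_.mul_inv_rev, Units.val_mul, mul_apply_eq_vecMul]
  exact vecMul_mem_levelLattice (pow_deltaExp_sub_dvd_of_mem_Hij (inv_mem hh)) hA

lemma L0set_eq : L0set p n i j = levelLattice (p : ℤ) (fun b : Fin n => deltaExp i j b) 2 := by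
  ext v
  refine forall_congr' fun b => ?_
  change _ ↔ (p : ℤ) ^ (2 - deltaExp i j b) ∣ v b
  unfold deltaExp
  split_ifs <;> simp_all [not_lt]

lemma Ssetij_eq (hn : 0 < n) :
    Ssetij p n i j = invRowSet ⟨n - 1, Nat.sub_lt hn Nat.one_pos⟩ (L0set p n i j) := by
  ext A
  exact forall_prop_of_true hn

lemma Sseti_eq (hn : 0 < n) : Sseti p n i = invRowSet ⟨n - 1, Nat.sub_lt hn Nat.one_pos⟩
    (levelLattice (p : ℤ) (fun b : Fin n => deltaExp i j b) 1) := by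
  ext A
  refine (forall_prop_of_true hn).trans (forall_congr' fun b => ?_)
  change _ ↔ (p : ℤ) ^ (1 - deltaExp i j b) ∣ _
  unfold deltaExp
  split_ifs <;> simp_all [not_lt]

lemma Ncount_eq_card_image (lam : Fin n → ℤ) :
    Ncount p hp n i j lam = Nat.card (Quotient.mk (QuotientGroup.rightRel (Hij p hp n i j)) ''
      {A | lam ᵥ* (A⁻¹).val ∈ L0set p n i j}) := by
  unfold Ncount
  congr 2
  ext c
  exact exists_congr fun A => by rw [exists_transpose_mulVec_eq_iff, and_comm]; rfl

lemma Ncount_eq_of_gcd_eq {lam : Fin n → ℤ} {s : ℕ} {d : ℤ}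
    (hg : Finset.univ.gcd lam = (p : ℤ) ^ s * d) (hd : ¬ (p : ℤ) ∣ d) (r : Fin n) :
    Ncount p hp n i j lam = Nat.card (cosetsIn (Hij p hp n i j)
      (invRowSet r (levelLattice (p : ℤ) (fun b : Fin n => deltaExp i j b) (2 - s)))) := by
  obtain ⟨ν, hlam, hν⟩ := Finset.extract_gcd lam (Finset.univ_nonempty_iff.2 ⟨r⟩)
  obtain ⟨U, hU⟩ := exists_unit_row_eq (Ideal.span_range_eq_top_of_gcd_eq_one hν) r
  have hlam' : lam = ((p : ℤ) ^ s * d) • ν := funext fun a => by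
    rw [hlam a (Finset.mem_univ a), hg]; rfl
  have hset : {A | lam ᵥ* (A⁻¹).val ∈ L0set p n i j} = (· * U⁻¹) ⁻¹'
      invRowSet r (levelLattice (p : ℤ) (fun b : Fin n => deltaExp i j b) (2 - s)) := by
    ext A
    change lam ᵥ* (A⁻¹).val ∈ L0set p n i j ↔
      ((A * U⁻¹)⁻¹).val r ∈ levelLattice (p : ℤ) (fun b : Fin n => deltaExp i j b) (2 - s)
    rw [_root_.mul_inv_rev, inv_inv, Units.val_mul, mul_apply_eq_vecMul, hU, hlam', smul_vecMul,
      L0set_eq, smul_mem_levelLattice_iff (Nat.prime_iff_prime_int.mp hp) hd]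
  rw [Ncount_eq_card_image, hset, card_image_mk_preimage_mul_right,
    cosetsIn_eq_image _ fun h hh A hA => mul_mem_invRowSet_levelLattice r hh hA]
  rfl

lemma Ncount_eq_card_of_sq_dvd {lam : Fin n → ℤ} (h : (p : ℤ) ^ 2 ∣ Finset.univ.gcd lam) :
    Ncount p hp n i j lam = Nat.card (cosetSpace (Hij p hp n i j)) := by
  have huniv : {A : (Matrix (Fin n) (Fin n) ℤ)ˣ | lam ᵥ* (A⁻¹).val ∈ L0set p n i j} = Set.univ :=
    Set.eq_univ_of_forall fun A => L0set_eq ▸ mem_levelLattice_of_forall_pow_dvd fun b =>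
      by simp only [vecMul, dotProduct]; exact Finset.dvd_sum fun a _ =>
        (h.trans (Finset.gcd_dvd (Finset.mem_univ a))).mul_right _
  rw [Ncount_eq_card_image, huniv, Set.image_univ_of_surjective Quotient.mk_surjective,
    Nat.card_univ]
  rfl

end CosetCount

theorem statement5_general (p n i j : ℕ) (hp : p.Prime) (lam : Fin n → ℤ) :
    (¬ (p : ℤ) ∣ Finset.univ.gcd lam →
        Ncount p hp n i j lam = Nat.card ↥(cosetsIn (Hij p hp n i j) (Ssetij p n i j))) ∧
    ((p : ℤ) ∣ Finset.univ.gcd lam → ¬ (p : ℤ) ^ 2 ∣ Finset.univ.gcd lam →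
        Ncount p hp n i j lam = Nat.card ↥(cosetsIn (Hij p hp n i j) (Sseti p n i))) ∧
    ((p : ℤ) ^ 2 ∣ Finset.univ.gcd lam →
        Ncount p hp n i j lam = Nat.card (cosetSpace (Hij p hp n i j))) := by
  refine ⟨fun hndvd => ?_, fun ⟨d, hd⟩ hnsq => ?_, Ncount_eq_card_of_sq_dvd⟩
  · have hn := pos_of_not_dvd_gcd hndvd
    rw [Ssetij_eq hn, L0set_eq, Ncount_eq_of_gcd_eq (s := 0) (by rw [pow_zero, one_mul]) hndvd]
  · have hn := pos_of_not_dvd_gcd hnsq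
    have hpd : ¬ (p : ℤ) ∣ d := fun ⟨e, he⟩ => hnsq ⟨e, by rw [hd, he]; ring⟩
    rw [Sseti_eq (j := j) hn, Ncount_eq_of_gcd_eq (s := 1) (by rw [hd, pow_one]) hpd]

/-- for a prime `p`, `n ≥ 1`, `0 ≤ i ≤ j ≤ n` and `λ ∈ ℤ^n`, with `g` the
gcd of the entries of `λ`: `N(λ) = |H_{i,j}\S_{i,j}|` if `p ∤ g`; `N(λ) = |H_{i,j}\S_i|`
if `p ∣ g` but `p² ∤ g`; and `N(λ) = |H_{i,j}\GL_n(ℤ)|` if `p² ∣ g`. -/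
theorem statement5 (p n i j : ℕ) (hp : p.Prime) (hn : 1 ≤ n) (hij : i ≤ j) (hj : j ≤ n)
    (lam : Fin n → ℤ) :
    (¬ (p : ℤ) ∣ Finset.univ.gcd lam →
        Ncount p hp n i j lam = Nat.card ↥(cosetsIn (Hij p hp n i j) (Ssetij p n i j))) ∧
    ((p : ℤ) ∣ Finset.univ.gcd lam → ¬ (p : ℤ) ^ 2 ∣ Finset.univ.gcd lam →
        Ncount p hp n i j lam = Nat.card ↥(cosetsIn (Hij p hp n i j) (Sseti p n i))) ∧
    ((p : ℤ) ^ 2 ∣ Finset.univ.gcd lam →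
        Ncount p hp n i j lam = Nat.card (cosetSpace (Hij p hp n i j))) :=
  statement5_general p n i j hp lam

end
end

section
/- Let p be a prime and let n ≥ 1 and 0 ≤ j ≤ n be integers. Then the number of symmetric n×n matrices over ℤ/pℤ of rank j equals p^{⌊j/2⌋(⌊j/2⌋+1)} · g_p(n,j) · ∏_{α=1, α odd}^{j} (p^α − 1). -/
/-!
Over a finite field `𝔽_q`, a symmetric matrix `X` of rank `r` factors as `X = P B Pᵀ`, where the
columns of `P` form a basis of the range `U` of `X` and `B` is an invertible symmetric `r × r`
matrix determined by `X` and `P`. Hence the number of symmetric `m × m` matrices of rank `r` is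
`[m, r]_q · N(r)`, where `N(r)` counts the invertible symmetric `r × r` matrices, and counting all
`q^(m(m+1)/2)` symmetric matrices by rank gives `q^(m(m+1)/2) = ∑_{r ≤ m} [m, r]_q · N(r)`.
Since `[m, m]_q = 1`, these identities determine `N` recursively; the closed form
`q^(⌊r/2⌋(⌊r/2⌋+1)) ∏_{a ≤ r, a odd} (q^a - 1)` satisfies them by a `q`-Pascal computation, so it
is `N(r)`. The characteristic of the field plays no role.
-/

open Matrix

noncomputable section

open Finset Module Function

section QBinomial

variable {K : Type*} [Field K] (q : K)

def qProd (r : ℕ) : K := ∏ i ∈ range r, (q ^ (i + 1) - 1)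

def qDescProd (m r : ℕ) : K := ∏ i ∈ range r, (q ^ (m - i) - 1)

def qBinom (m r : ℕ) : K := qDescProd q m r / qProd q r

variable {q}

lemma qProd_ne_zero (hq : ∀ i : ℕ, q ^ (i + 1) ≠ 1) (r : ℕ) : qProd q r ≠ 0 :=
  prod_ne_zero_iff.2 fun i _ => sub_ne_zero.2 (hq i)

lemma qDescProd_eq_zero_of_lt {m r : ℕ} (h : m < r) : qDescProd q m r = 0 :=
  prod_eq_zero (mem_range.2 h) (by simp)

lemma qProd_succ (r : ℕ) : qProd q (r + 1) = qProd q r * (q ^ (r + 1) - 1) :=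
  prod_range_succ _ _

lemma qDescProd_succ (m r : ℕ) : qDescProd q m (r + 1) = qDescProd q m r * (q ^ (m - r) - 1) :=
  prod_range_succ _ _

lemma qDescProd_succ_succ (m r : ℕ) :
    qDescProd q (m + 1) (r + 1) = (q ^ (m + 1) - 1) * qDescProd q m r := by
  simp only [qDescProd, prod_range_succ', Nat.sub_zero, Nat.add_sub_add_right, mul_comm]

lemma qDescProd_self (m : ℕ) : qDescProd q m m = qProd q m := by
  rw [qDescProd, qProd, ← prod_range_reflect]
  exact prod_congr rfl fun i hi => by rw [mem_range] at hi; congr 2; omega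

/-- Both `q`-Pascal rules reduce to this identity. -/
lemma qDescProd_mul_pow (m r : ℕ) :
    qDescProd q m r * (q ^ (r + 1) * q ^ (m - r)) = qDescProd q m r * q ^ (m + 1) := by
  rcases le_or_gt r m with h | h
  · rw [← pow_add]; congr 2; omega
  · simp [qDescProd_eq_zero_of_lt h]

lemma qBinom_zero_right (m : ℕ) : qBinom q m 0 = 1 := by
  simp [qBinom, qDescProd, qProd]

lemma qBinom_eq_zero_of_lt {m r : ℕ} (h : m < r) : qBinom q m r = 0 := by
  rw [qBinom, qDescProd_eq_zero_of_lt h, zero_div]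

variable (hq : ∀ i : ℕ, q ^ (i + 1) ≠ 1)
include hq

lemma qBinom_self (m : ℕ) : qBinom q m m = 1 := by
  rw [qBinom, qDescProd_self, div_self (qProd_ne_zero hq m)]

lemma qBinom_succ_succ (m r : ℕ) :
    qBinom q (m + 1) (r + 1) = qBinom q m r + q ^ (r + 1) * qBinom q m (r + 1) := by
  have := qProd_ne_zero hq r
  have := sub_ne_zero.2 (hq r)
  rw [qBinom, qBinom, qBinom, qDescProd_succ_succ, qDescProd_succ, qProd_succ]
  field_simp
  linear_combination -qDescProd_mul_pow (q := q) m r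

lemma qBinom_succ_succ' (m r : ℕ) :
    qBinom q (m + 1) (r + 1) = q ^ (m - r) * qBinom q m r + qBinom q m (r + 1) := by
  have := qProd_ne_zero hq r
  have := sub_ne_zero.2 (hq r)
  rw [qBinom, qBinom, qBinom, qDescProd_succ_succ, qDescProd_succ, qProd_succ]
  field_simp
  linear_combination -qDescProd_mul_pow (q := q) m r

end QBinomial

lemma prod_pow_sub_pow {K : Type*} [Field K] (q : K) {a k : ℕ} (hk : k ≤ a) :
    ∏ i ∈ range k, (q ^ a - q ^ i) = q ^ (∑ i ∈ range k, i) * qDescProd q a k := by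
  rw [qDescProd, ← prod_pow_eq_pow_sum, ← prod_mul_distrib]
  refine prod_congr rfl fun i hi => ?_
  rw [mul_sub, ← pow_add, mul_one, Nat.add_sub_cancel' (by have := mem_range.1 hi; omega)]

lemma qBinom_natCast_eq_gaussCoeff {p n j : ℕ} (hj : j ≤ n) :
    qBinom (p : ℚ) n j = gaussCoeff p n j := by
  rcases j.eq_zero_or_pos with rfl | hj0
  · simp [gaussCoeff, qBinom_zero_right]
  rw [gaussCoeff, if_neg hj0.ne', if_pos ⟨hj0, hj⟩, qBinom, qDescProd, qProd, ← prod_div_distrib,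
    ← Ico_add_one_right_eq_Icc, prod_Ico_eq_prod_range, Nat.add_sub_cancel]
  refine prod_congr rfl fun i hi => ?_
  rw [mem_range] at hi
  rw [show n - (1 + i) + 1 = n - i by omega, add_comm 1 i]

section NondegCount

variable {K : Type*} [Field K] (q : K)

/-- The closed form of the number of invertible symmetric `r × r` matrices over `𝔽_q`. -/
def nondegSymmCount (r : ℕ) : K :=
  q ^ (r / 2 * (r / 2 + 1)) * ∏ a ∈ Icc 1 r with Odd a, (q ^ a - 1)

variable {q}

lemma nondegSymmCount_zero : nondegSymmCount q 0 = 1 := by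
  simp [nondegSymmCount]

lemma nondegSymmCount_succ (r : ℕ) :
    nondegSymmCount q (r + 1) = nondegSymmCount q r * (q ^ (r + 1) - if Even r then 1 else 0) := by
  rw [nondegSymmCount, nondegSymmCount, ← insert_Icc_right_eq_Icc_add_one (by omega),
    filter_insert]
  obtain ⟨t, rfl | rfl⟩ := Nat.even_or_odd' r
  · rw [if_pos (odd_two_mul_add_one t), prod_insert (by simp), if_pos (even_two_mul t),
      show (2 * t + 1) / 2 = t by omega, show 2 * t / 2 = t by omega]
    ring
  · have hodd : ¬Odd (2 * t + 1 + 1) := by rw [Nat.not_odd_iff_even]; exact ⟨t + 1, by ring⟩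
    rw [if_neg hodd, if_neg (Nat.not_even_iff_odd.2 (odd_two_mul_add_one t)),
      show (2 * t + 1 + 1) / 2 = t + 1 by omega, show (2 * t + 1) / 2 = t by omega,
      show (t + 1) * (t + 1 + 1) = t * (t + 1) + (2 * t + 1 + 1) by ring, pow_add]
    ring

end NondegCount

section SymmCountIdentity

variable {K : Type*} [Field K] (q : K)

def symmCount (k : ℕ) : K := ∑ r ∈ range (k + 1), qBinom q k r * nondegSymmCount q r

def symmCountEven (k : ℕ) : K :=
  ∑ r ∈ range (k + 1) with Even r, q ^ (k - r) * qBinom q k r * nondegSymmCount q r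

variable {q}

lemma add_sum_odd_pairs (a : ℕ → K) {N : ℕ} (h : a N = 0) :
    a 0 + ∑ s ∈ range N with Odd s, (a s + a (s + 1)) = ∑ s ∈ range N, a s := by
  have shift : ∑ s ∈ range (N + 1) with Even s, a s
      = a 0 + ∑ s ∈ range N with Odd s, a (s + 1) := by
    rw [sum_filter, sum_filter, sum_range_succ']
    simp [Nat.even_add_one, add_comm]
  have last : ∑ s ∈ range (N + 1) with Even s, a s = ∑ s ∈ range N with Even s, a s := by
    rw [sum_filter, sum_filter, sum_range_succ, h, ite_self, add_zero]
  rw [sum_add_distrib, ← add_assoc, add_comm (a 0), add_assoc, ← shift, last,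
    ← sum_filter_add_sum_filter_not (range N) Even]
  simp [Nat.not_even_iff_odd, add_comm]

variable (hq : ∀ i : ℕ, q ^ (i + 1) ≠ 1)
include hq

lemma symmCount_succ (k : ℕ) :
    symmCount q (k + 1) = (1 + q ^ (k + 1)) * symmCount q k - symmCountEven q k := by
  have hT : symmCount q k
      = 1 + ∑ s ∈ range (k + 1), qBinom q k (s + 1) * nondegSymmCount q (s + 1) := by
    rw [sum_range_succ, qBinom_eq_zero_of_lt (lt_add_one k), zero_mul, add_zero, symmCount,
      sum_range_succ', qBinom_zero_right, nondegSymmCount_zero, mul_one, add_comm]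
  have hW : ∑ s ∈ range (k + 1), q ^ (k - s) * qBinom q k s * nondegSymmCount q (s + 1)
      = q ^ (k + 1) * symmCount q k - symmCountEven q k := by
    rw [symmCount, symmCountEven, sum_filter, mul_sum, ← sum_sub_distrib]
    refine sum_congr rfl fun s hs => ?_
    have e : q ^ (k - s) * q ^ (s + 1) = q ^ (k + 1) := by
      rw [← pow_add]; congr 1; have := mem_range.1 hs; omega
    rw [nondegSymmCount_succ]
    split_ifs <;> linear_combination qBinom q k s * nondegSymmCount q s * e
  rw [symmCount, sum_range_succ', qBinom_zero_right, nondegSymmCount_zero]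
  simp_rw [qBinom_succ_succ' hq, add_mul, sum_add_distrib]
  linear_combination hW - hT

lemma symmCountEven_succ (k : ℕ) : symmCountEven q (k + 1) = q ^ (k + 1) * symmCount q k := by
  set a : ℕ → K := fun r => qBinom q k r * nondegSymmCount q r
  -- For odd `s`, the `q`-Pascal rule splits the term `s + 1` of `symmCountEven q (k + 1)` into
  -- the terms `s` and `s + 1` of `symmCount q k`.
  have step : ∀ s ∈ range (k + 1),
      (if Even (s + 1) then q ^ (k + 1 - (s + 1)) * qBinom q (k + 1) (s + 1)
        * nondegSymmCount q (s + 1) else 0)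
      = q ^ (k + 1) * (if Odd s then a s + a (s + 1) else 0) := by
    intro s hs
    have e : q ^ (k - s) * q ^ (s + 1) = q ^ (k + 1) := by
      rw [← pow_add]; congr 1; have := mem_range.1 hs; omega
    rcases Nat.even_or_odd s with hs' | hs'
    · simp [Nat.even_add_one, hs', Nat.not_odd_iff_even.2 hs']
    · rw [if_pos (Nat.even_add_one.2 (Nat.not_even_iff_odd.2 hs')), if_pos hs',
        Nat.add_sub_add_right, qBinom_succ_succ hq]
      simp only [a, nondegSymmCount_succ, if_neg (Nat.not_even_iff_odd.2 hs'), sub_zero]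
      linear_combination (qBinom q k s + q ^ (s + 1) * qBinom q k (s + 1))
        * nondegSymmCount q s * e
  have pairs := add_sum_odd_pairs a (N := k + 1) (by simp [a, qBinom_eq_zero_of_lt])
  rw [symmCountEven, sum_filter, sum_range_succ', sum_congr rfl step, ← mul_sum, ← sum_filter,
    symmCount, ← pairs]
  simp [a, qBinom_zero_right, nondegSymmCount_zero]
  ring

theorem symmCount_eq (k : ℕ) : symmCount q k = q ^ (k + 1).choose 2 := by
  induction k using Nat.twoStepInduction with
  | zero => simp [symmCount, qBinom_zero_right, nondegSymmCount_zero]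
  | one =>
    rw [symmCount_succ hq]
    simp [symmCount, symmCountEven, qBinom_zero_right, nondegSymmCount_zero, filter_singleton]
  | more k ih₀ ih₁ =>
    -- `symmCount q (k + 2) = (1 + q ^ (k + 2)) * symmCount q (k + 1) - q ^ (k + 1) * symmCount q k`
    rw [symmCount_succ hq, symmCountEven_succ hq, ih₀, ih₁, Nat.choose_succ_succ' (k + 2),
      Nat.choose_succ_succ' (k + 1), Nat.choose_one_right, Nat.choose_one_right]
    ring

end SymmCountIdentity

lemma natCast_prod_pow_sub_pow {q a k : ℕ} (hq : 0 < q) (hk : k ≤ a) :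
    ((∏ i : Fin k, (q ^ a - q ^ (i : ℕ)) : ℕ) : ℚ)
      = ∏ i ∈ range k, ((q : ℚ) ^ a - (q : ℚ) ^ i) := by
  rw [Fin.prod_univ_eq_prod_range (fun i => q ^ a - q ^ i), Nat.cast_prod]
  refine prod_congr rfl fun i hi => ?_
  rw [Nat.cast_sub (Nat.pow_le_pow_right hq (by have := mem_range.1 hi; omega)),
    Nat.cast_pow, Nat.cast_pow]

lemma natCast_card_pow_succ_ne_one (F : Type*) [Fintype F] [Nontrivial F] (i : ℕ) :
    (Fintype.card F : ℚ) ^ (i + 1) ≠ 1 :=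
  (one_lt_pow₀ (by exact_mod_cast Fintype.one_lt_card) i.succ_ne_zero).ne'

theorem Nat.card_eq_card_mul_of_card_fiber_eq {α ι : Type*} [Finite α] [Finite ι] (g : α → ι)
    {c : ℕ} (h : ∀ i, Nat.card {x // g x = i} = c) : Nat.card α = Nat.card ι * c := by
  have := Fintype.ofFinite ι
  rw [← Nat.card_congr (Equiv.sigmaFiberEquiv g), Nat.card_sigma, sum_congr rfl fun i _ => h i,
    sum_const, Finset.card_univ, smul_eq_mul, Nat.card_eq_fintype_card]

theorem Nat.card_eq_sum_card_fiber_range {α : Type*} [Finite α] (g : α → ℕ) {m : ℕ}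
    (hg : ∀ x, g x ≤ m) : Nat.card α = ∑ r ∈ range (m + 1), Nat.card {x // g x = r} := by
  let g' : α → Fin (m + 1) := fun x => ⟨g x, Nat.lt_succ_of_le (hg x)⟩
  rw [← Nat.card_congr (Equiv.sigmaFiberEquiv g'), Nat.card_sigma,
    ← Fin.sum_univ_eq_sum_range (fun r => Nat.card {x // g x = r})]
  exact sum_congr rfl fun i _ => Nat.card_congr (Equiv.subtypeEquivRight fun x => Fin.ext_iff)

section Subspaces

variable {F V : Type*} [Field F] [AddCommGroup V] [Module F V]

def linearIndependentSpanEquiv [FiniteDimensional F V] {k : ℕ} (W : Submodule F V)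
    (hW : finrank F W = k) :
    {v : {v : Fin k → V // LinearIndependent F v} // Submodule.span F (Set.range v.1) = W}
      ≃ {w : Fin k → W // LinearIndependent F w} where
  toFun v := ⟨fun i => ⟨v.1.1 i, v.2.le (Submodule.subset_span ⟨i, rfl⟩)⟩,
    .of_comp W.subtype v.1.2⟩
  invFun w := ⟨⟨fun i => w.1 i, w.2.map' W.subtype W.ker_subtype⟩, by
    have htop : Submodule.span F (Set.range w.1) = ⊤ := by
      apply Submodule.eq_top_of_finrank_eq
      rw [finrank_span_eq_card w.2, Fintype.card_fin, hW]
    rw [show Set.range (fun i => (w.1 i : V)) = W.subtype '' Set.range w.1 from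
      Set.range_comp _ _, Submodule.span_image, htop, Submodule.map_top,
      Submodule.range_subtype]⟩
  left_inv _ := rfl
  right_inv _ := rfl

variable [Fintype F] [Finite V]

theorem card_submodule_finrank_mul {k : ℕ} (hk : k ≤ finrank F V) :
    Nat.card {W : Submodule F V // finrank F W = k}
        * ∏ i : Fin k, (Fintype.card F ^ k - Fintype.card F ^ (i : ℕ))
      = ∏ i : Fin k, (Fintype.card F ^ finrank F V - Fintype.card F ^ (i : ℕ)) := by
  rw [← card_linearIndependent hk]
  refine (Nat.card_eq_card_mul_of_card_fiber_eq (fun v : {v : Fin k → V // LinearIndependent F v} =>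
    (⟨Submodule.span F (Set.range v.1), by rw [finrank_span_eq_card v.2, Fintype.card_fin]⟩ :
      {W : Submodule F V // finrank F W = k})) fun W => ?_).symm
  rw [Nat.card_congr ((Equiv.subtypeEquivRight fun v => Subtype.ext_iff).trans
    (linearIndependentSpanEquiv W.1 W.2)), card_linearIndependent W.2.ge, W.2]

theorem natCast_card_submodule_finrank {k : ℕ} (hk : k ≤ finrank F V) :
    (Nat.card {W : Submodule F V // finrank F W = k} : ℚ)
      = qBinom (Fintype.card F : ℚ) (finrank F V) k := by
  have hq := natCast_card_pow_succ_ne_one F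
  have h := congrArg (Nat.cast : ℕ → ℚ) (card_submodule_finrank_mul (F := F) (V := V) hk)
  rw [Nat.cast_mul, natCast_prod_pow_sub_pow Fintype.card_pos le_rfl,
    natCast_prod_pow_sub_pow Fintype.card_pos hk, prod_pow_sub_pow _ le_rfl,
    prod_pow_sub_pow _ hk, qDescProd_self] at h
  rw [qBinom, eq_div_iff (qProd_ne_zero hq k)]
  have hcard : (Fintype.card F : ℚ) ≠ 0 := Nat.cast_ne_zero.2 Fintype.card_ne_zero
  refine mul_left_cancel₀ (pow_ne_zero (∑ i ∈ range k, i) hcard) ?_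
  linear_combination h

end Subspaces

section MatrixFactorization

variable {F : Type*} [Field F] {n k l : Type*} [Fintype k]

lemma Matrix.eq_of_mulVecLin_eq [Fintype l] {X Y : Matrix n l F}
    (h : X.mulVecLin = Y.mulVecLin) : X = Y := by
  classical
  exact toLin'.injective (by rwa [toLin'_apply', toLin'_apply'])

lemma Matrix.mulVecLin_transpose_surjective [Fintype n] {P : Matrix n k F}
    (hP : Injective P.mulVecLin) : Surjective Pᵀ.mulVecLin := by
  rw [← LinearMap.range_eq_top, Submodule.eq_top_iff_finrank_eq]
  change Pᵀ.rank = _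
  rw [rank_transpose, rank, LinearMap.finrank_range_of_inj hP]

lemma Matrix.eq_of_mul_eq_mul_left [Fintype l] {P : Matrix n k F}
    (hP : Injective P.mulVecLin) {A B : Matrix k l F} (h : P * A = P * B) : A = B := by
  apply eq_of_mulVecLin_eq
  rw [← LinearMap.cancel_left hP, ← mulVecLin_mul, ← mulVecLin_mul, h]

lemma Matrix.eq_of_mul_eq_mul_right [Fintype n] {Q : Matrix k n F}
    (hQ : Surjective Q.mulVecLin) {A B : Matrix l k F} (h : A * Q = B * Q) : A = B := by
  apply eq_of_mulVecLin_eq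
  rw [← LinearMap.cancel_right hQ, ← mulVecLin_mul, ← mulVecLin_mul, h]

lemma Matrix.exists_eq_mul_of_range_le [Fintype n] [Fintype l] {X : Matrix n l F}
    {P : Matrix n k F} (h : LinearMap.range X.mulVecLin ≤ LinearMap.range P.mulVecLin) :
    ∃ A : Matrix k l F, X = P * A := by
  classical
  obtain ⟨f, hf⟩ := Module.projective_lifting_property P.mulVecLin.rangeRestrict
    (X.mulVecLin.codRestrict _ fun v => h ⟨v, rfl⟩) P.mulVecLin.surjective_rangeRestrict
  refine ⟨LinearMap.toMatrix' f, eq_of_mulVecLin_eq (LinearMap.ext fun v => ?_)⟩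
  rw [mulVecLin_mul, ← toLin'_apply' (LinearMap.toMatrix' f), toLin'_toMatrix']
  exact congrArg Subtype.val (LinearMap.congr_fun hf v).symm

lemma Matrix.exists_mulVecLin_injective_range_eq [Fintype n] [DecidableEq n] {r : ℕ}
    (U : Submodule F (n → F)) (hU : finrank F U = r) :
    ∃ P : Matrix n (Fin r) F, Injective P.mulVecLin ∧ LinearMap.range P.mulVecLin = U := by
  let e : (Fin r → F) ≃ₗ[F] U := LinearEquiv.ofFinrankEq _ _ (by simp [hU])
  refine ⟨LinearMap.toMatrix' (U.subtype ∘ₗ e.toLinearMap), ?_⟩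
  rw [← toLin'_apply', toLin'_toMatrix', LinearMap.range_comp, LinearEquiv.range,
    Submodule.map_top, Submodule.range_subtype]
  exact ⟨U.injective_subtype.comp e.injective, rfl⟩

end MatrixFactorization

section Congruence

variable {F : Type*} [Field F] {n k : Type*} [Fintype n] [Fintype k]
  {P : Matrix n k F} (hP : Injective P.mulVecLin)
include hP

lemma Matrix.mul_mul_transpose_injective : Injective fun B : Matrix k k F => P * B * Pᵀ :=
  fun _ _ h =>
    eq_of_mul_eq_mul_left hP (eq_of_mul_eq_mul_right (mulVecLin_transpose_surjective hP) h)

lemma Matrix.isSymm_mul_mul_transpose_iff (B : Matrix k k F) :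
    (P * B * Pᵀ).IsSymm ↔ B.IsSymm := by
  rw [IsSymm, IsSymm, transpose_mul, transpose_mul, transpose_transpose, ← Matrix.mul_assoc]
  exact (mul_mul_transpose_injective hP).eq_iff

lemma Matrix.range_mul_mul_transpose (B : Matrix k k F) :
    LinearMap.range (P * B * Pᵀ).mulVecLin = (LinearMap.range B.mulVecLin).map P.mulVecLin := by
  rw [mulVecLin_mul, mulVecLin_mul, LinearMap.range_comp_of_range_eq_top _
    (LinearMap.range_eq_top.2 (mulVecLin_transpose_surjective hP)), LinearMap.range_comp]

lemma Matrix.range_mul_mul_transpose_eq_iff (B : Matrix k k F) :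
    LinearMap.range (P * B * Pᵀ).mulVecLin = LinearMap.range P.mulVecLin
      ↔ B.rank = Fintype.card k := by
  rw [range_mul_mul_transpose hP, LinearMap.range_eq_map P.mulVecLin,
    (Submodule.map_injective_of_injective hP).eq_iff, Submodule.eq_top_iff_finrank_eq,
    Module.finrank_fintype_fun_eq_card, rank]

def Matrix.mulMulTransposeEquiv :
    {B : Matrix k k F // B.IsSymm ∧ B.rank = Fintype.card k}
      ≃ {X : Matrix n n F //
          X.IsSymm ∧ LinearMap.range X.mulVecLin = LinearMap.range P.mulVecLin} :=
  Equiv.ofBijective (fun B => ⟨P * B.1 * Pᵀ, (isSymm_mul_mul_transpose_iff hP _).2 B.2.1,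
      (range_mul_mul_transpose_eq_iff hP _).2 B.2.2⟩) <| by
    refine ⟨fun _ _ h => Subtype.ext (mul_mul_transpose_injective hP (congrArg Subtype.val h)),
      ?_⟩
    rintro ⟨X, hsymm, hrange⟩
    obtain ⟨A, rfl⟩ := exists_eq_mul_of_range_le hrange.le
    have hAt : LinearMap.range Aᵀ.mulVecLin ≤ LinearMap.range P.mulVecLin := by
      rw [← hrange, ← hsymm.eq, transpose_mul, mulVecLin_mul,
        LinearMap.range_comp_of_range_eq_top _
          (LinearMap.range_eq_top.2 (mulVecLin_transpose_surjective hP))]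
    obtain ⟨B, hB⟩ := exists_eq_mul_of_range_le hAt
    have hX : P * A = P * B * Pᵀ := by rw [← hsymm.eq, transpose_mul, hB]
    rw [hX] at hsymm hrange
    exact ⟨⟨B, (isSymm_mul_mul_transpose_iff hP B).1 hsymm,
      (range_mul_mul_transpose_eq_iff hP B).1 hrange⟩, Subtype.ext hX.symm⟩

end Congruence

section SymmetricCount

theorem card_isSymm {α : Type*} [Fintype α] (m : ℕ) :
    Nat.card {X : Matrix (Fin m) (Fin m) α // X.IsSymm} = Fintype.card α ^ (m + 1).choose 2 := by
  have e : {X : Matrix (Fin m) (Fin m) α // X.IsSymm}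
      ≃ {f : Fin m → Fin m → α // ∀ i j, f i j = f j i} :=
    Equiv.subtypeEquivRight fun X => by rw [IsSymm.ext_iff, forall_comm]
  rw [Nat.card_congr (e.trans Sym2.lift),
    Nat.card_eq_fintype_card, Fintype.card_fun, Sym2.card, Fintype.card_fin]

variable {F : Type*} [Field F]

theorem card_isSymm_eq_sum [Fintype F] (m : ℕ) :
    Nat.card {X : Matrix (Fin m) (Fin m) F // X.IsSymm}
      = ∑ r ∈ range (m + 1),
          Nat.card {X : Matrix (Fin m) (Fin m) F // X.IsSymm ∧ X.rank = r} := by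
  rw [Nat.card_eq_sum_card_fiber_range (fun X : {X : Matrix (Fin m) (Fin m) F // X.IsSymm} =>
    X.1.rank) fun X => X.1.rank_le_width]
  exact sum_congr rfl fun r _ => Nat.card_congr (Equiv.subtypeSubtypeEquivSubtypeInter
    (fun X : Matrix (Fin m) (Fin m) F => X.IsSymm) (fun X => X.rank = r))

theorem card_isSymm_range_eq {m r : ℕ} (U : Submodule F (Fin m → F)) (hU : finrank F U = r) :
    Nat.card {X : Matrix (Fin m) (Fin m) F // X.IsSymm ∧ LinearMap.range X.mulVecLin = U}
      = Nat.card {B : Matrix (Fin r) (Fin r) F // B.IsSymm ∧ B.rank = r} := by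
  obtain ⟨P, hP, rfl⟩ := exists_mulVecLin_injective_range_eq U hU
  rw [← Nat.card_congr (mulMulTransposeEquiv hP), Fintype.card_fin]

theorem card_isSymm_rank_eq [Fintype F] (m r : ℕ) :
    Nat.card {X : Matrix (Fin m) (Fin m) F // X.IsSymm ∧ X.rank = r}
      = Nat.card {U : Submodule F (Fin m → F) // finrank F U = r}
        * Nat.card {B : Matrix (Fin r) (Fin r) F // B.IsSymm ∧ B.rank = r} := by
  refine Nat.card_eq_card_mul_of_card_fiber_eq
    (fun X : {X : Matrix (Fin m) (Fin m) F // X.IsSymm ∧ X.rank = r} =>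
      (⟨LinearMap.range X.1.mulVecLin, X.2.2⟩ :
        {U : Submodule F (Fin m → F) // finrank F U = r}))
    fun U => ?_
  rw [← card_isSymm_range_eq U.1 U.2]
  refine Nat.card_congr ((Equiv.subtypeEquivRight fun X => Subtype.ext_iff).trans
    ((Equiv.subtypeSubtypeEquivSubtypeInter
      (fun X : Matrix (Fin m) (Fin m) F => X.IsSymm ∧ X.rank = r)
      (fun X => LinearMap.range X.mulVecLin = U.1)).trans (Equiv.subtypeEquivRight fun X => ?_)))
  constructor
  · exact fun ⟨⟨hsymm, _⟩, hrange⟩ => ⟨hsymm, hrange⟩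
  · exact fun ⟨hsymm, hrange⟩ => ⟨⟨hsymm, by rw [rank, hrange, U.2]⟩, hrange⟩

end SymmetricCount

section Main

variable (F : Type*) [Field F] [Fintype F]

theorem pow_choose_two_eq_sum_qBinom_mul_card (m : ℕ) :
    (Fintype.card F : ℚ) ^ (m + 1).choose 2
      = ∑ r ∈ range (m + 1), qBinom (Fintype.card F : ℚ) m r
          * Nat.card {B : Matrix (Fin r) (Fin r) F // B.IsSymm ∧ B.rank = r} := by
  have h := congrArg (Nat.cast : ℕ → ℚ) ((card_isSymm m).symm.trans (card_isSymm_eq_sum (F := F) m))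
  push_cast at h
  rw [h]
  refine sum_congr rfl fun r hr => ?_
  have hrm : r ≤ finrank F (Fin m → F) := by
    rw [finrank_fin_fun]; exact Nat.lt_succ_iff.1 (mem_range.1 hr)
  rw [card_isSymm_rank_eq, Nat.cast_mul, natCast_card_submodule_finrank hrm, finrank_fin_fun]

theorem natCast_card_isSymm_rank_self_eq (r : ℕ) :
    (Nat.card {B : Matrix (Fin r) (Fin r) F // B.IsSymm ∧ B.rank = r} : ℚ)
      = nondegSymmCount (Fintype.card F : ℚ) r := by
  induction r using Nat.strong_induction_on with
  | _ r ih =>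
    have hq := natCast_card_pow_succ_ne_one F
    have h := pow_choose_two_eq_sum_qBinom_mul_card F r
    have hlower : ∑ s ∈ range r, qBinom (Fintype.card F : ℚ) r s
          * Nat.card {B : Matrix (Fin s) (Fin s) F // B.IsSymm ∧ B.rank = s}
        = ∑ s ∈ range r,
            qBinom (Fintype.card F : ℚ) r s * nondegSymmCount (Fintype.card F : ℚ) s :=
      sum_congr rfl fun s hs => by rw [ih s (mem_range.1 hs)]
    rw [← symmCount_eq hq, symmCount, sum_range_succ, sum_range_succ, qBinom_self hq, hlower] at h
    linarith

end Main

theorem statement7_general (p n j : ℕ) (hp : p.Prime) (hj : j ≤ n) :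
    (Nat.card ↥{x : Matrix (Fin n) (Fin n) (ZMod p) | x.IsSymm ∧ x.rank = j} : ℚ)
      = (p : ℚ) ^ ((j / 2) * (j / 2 + 1)) * gaussCoeff p n j
          * ∏ a ∈ (Finset.Icc 1 j).filter (fun a => Odd a), ((p : ℚ) ^ a - 1) := by
  have := Fact.mk hp
  rw [Set.coe_ofPred, card_isSymm_rank_eq, Nat.cast_mul,
    natCast_card_submodule_finrank (by rwa [finrank_fin_fun]), natCast_card_isSymm_rank_self_eq,
    ZMod.card, finrank_fin_fun, qBinom_natCast_eq_gaussCoeff hj, nondegSymmCount]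
  ring

/-- for a prime `p`, `n ≥ 1` and `0 ≤ j ≤ n`, the number of symmetric
`n × n` matrices over `ℤ/pℤ` of rank `j` equals
`p^{⌊j/2⌋(⌊j/2⌋+1)} · g_p(n,j) · ∏_{α=1, α odd}^{j} (p^α − 1)`. -/
theorem statement7 (p n j : ℕ) (hp : p.Prime) (hn : 1 ≤ n) (hj : j ≤ n) :
    (Nat.card ↥{x : Matrix (Fin n) (Fin n) (ZMod p) | x.IsSymm ∧ x.rank = j} : ℚ)
      = (p : ℚ) ^ ((j / 2) * (j / 2 + 1)) * gaussCoeff p n j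
          * ∏ a ∈ (Finset.Icc 1 j).filter (fun a => Odd a), ((p : ℚ) ^ a - 1) :=
  statement7_general p n j hp hj

end
end

section
/- Let k ≥ 2 be an integer and m a positive integer. Then g_k(m) · ∏_{p∣m} p^{k−1} = m^{k−1} · ∏_{p∣m} (p^{k−1} + 1), where both products run over the distinct primes p dividing m; equivalently, g_k(m) = m^{k−1} ∏_{p∣m} (1 + p^{1−k}) as an identity of rational numbers. -/
/-!
Since `d ↦ d²` is a bijection onto the squares, `g_k = μ(√·) * σ_{k−1}` is a Dirichlet convolution
of two multiplicative functions, the first supported on squares. At a prime power `p ^ a` with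
`a ≥ 1` that factor is nonzero only at `1` and `p²`, so
`g_k(p ^ a) = σ_{k−1}(p ^ a) − σ_{k−1}(p ^ (a − 2)) = p ^ ((a − 1)(k − 1)) (p ^ (k − 1) + 1)`,
and multiplying over the primes of `m` gives the identity.
-/

noncomputable section

/-- `g_k(m) = Σ_{d>0, d²∣m} μ(d) σ_{k−1}(m/d²)`. -/
def gkFun (k m : ℕ) : ℤ :=
  ∑ d ∈ (Finset.range (m + 1)).filter (fun d => 0 < d ∧ d ^ 2 ∣ m),
    ArithmeticFunction.moebius d * (ArithmeticFunction.sigma (k - 1) (m / d ^ 2) : ℤ)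

open Finset
open scoped ArithmeticFunction.sigma

theorem Nat.not_isSquare_prime_pow_of_odd {p i : ℕ} (hp : p.Prime) (hi : Odd i) :
    ¬IsSquare (p ^ i) := by
  rintro ⟨r, hr⟩
  obtain ⟨t, -, rfl⟩ := (Nat.dvd_prime_pow hp).1 (Dvd.intro _ hr.symm)
  rw [← pow_add] at hr
  have := Nat.pow_right_injective hp.two_le hr
  obtain ⟨j, rfl⟩ := hi
  omega

namespace ArithmeticFunction

variable {R : Type*}

section OnSquares

variable [Zero R] (f : ArithmeticFunction R)

def onSquares : ArithmeticFunction R :=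
  ⟨fun n => if IsSquare n then f n.sqrt else 0, by simp⟩

theorem onSquares_apply_sq (d : ℕ) : f.onSquares (d ^ 2) = f d := by
  simp [onSquares, Nat.sqrt_eq', IsSquare.sq]

theorem onSquares_apply_of_not_isSquare {n : ℕ} (hn : ¬IsSquare n) : f.onSquares n = 0 := by
  simp [onSquares, hn]

end OnSquares

theorem IsMultiplicative.onSquares [MonoidWithZero R] {f : ArithmeticFunction R}
    (hf : f.IsMultiplicative) : f.onSquares.IsMultiplicative := by
  refine ⟨by simpa using (f.onSquares_apply_sq 1).trans hf.map_one, fun {m n} hmn => ?_⟩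
  by_cases hsq : IsSquare (m * n)
  · obtain ⟨c, hc⟩ := hsq
    obtain ⟨a, rfl⟩ := exists_eq_pow_of_mul_eq_pow (Nat.isUnit_iff.2 hmn) (hc.trans (sq c).symm)
    obtain ⟨b, rfl⟩ := exists_eq_pow_of_mul_eq_pow (Nat.isUnit_iff.2 hmn.symm)
      ((mul_comm _ _).trans (hc.trans (sq c).symm))
    rw [← mul_pow, onSquares_apply_sq, onSquares_apply_sq, onSquares_apply_sq,
      hf.map_mul_of_coprime ((Nat.coprime_pow_left_iff two_pos _ _).1 <|
        (Nat.coprime_pow_right_iff two_pos _ _).1 hmn)]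
  · rw [onSquares_apply_of_not_isSquare _ hsq]
    by_cases hm : IsSquare m
    · rw [onSquares_apply_of_not_isSquare _ fun hn => hsq (hm.mul hn), mul_zero]
    · rw [onSquares_apply_of_not_isSquare _ hm, zero_mul]

theorem onSquares_mul_apply [Semiring R] (f g : ArithmeticFunction R) {n : ℕ} (hn : n ≠ 0) :
    (f.onSquares * g) n = ∑ d ∈ n.divisors with d ^ 2 ∣ n, f d * g (n / d ^ 2) := by
  rw [mul_apply, Nat.sum_divisorsAntidiagonal (fun a b => f.onSquares a * g b),
    ← sum_filter_of_ne (p := IsSquare) fun e _ he => by_contra fun hsq => he <| by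
      rw [onSquares_apply_of_not_isSquare _ hsq, zero_mul]]
  refine (sum_nbij' (· ^ 2) Nat.sqrt ?_ ?_ (fun d _ => Nat.sqrt_eq' d) ?_
    fun d _ => by rw [onSquares_apply_sq]).symm
  · intro d hd
    simp only [mem_filter, Nat.mem_divisors] at hd ⊢
    exact ⟨⟨hd.2, hn⟩, d, sq d⟩
  · rintro _ hd
    simp only [mem_filter, Nat.mem_divisors] at hd ⊢
    obtain ⟨⟨hdvd, -⟩, c, rfl⟩ := hd
    rw [← sq] at hdvd ⊢
    rw [Nat.sqrt_eq']
    exact ⟨⟨(Dvd.intro _ (sq c).symm).trans hdvd, hn⟩, hdvd⟩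
  · rintro _ hd
    obtain ⟨c, rfl⟩ := (mem_filter.1 hd).2
    rw [← sq, Nat.sqrt_eq']

theorem mul_apply_prime_pow [Semiring R] (f g : ArithmeticFunction R) {p : ℕ} (hp : p.Prime)
    (a : ℕ) : (f * g) (p ^ a) = ∑ i ∈ range (a + 1), f (p ^ i) * g (p ^ (a - i)) := by
  rw [mul_apply, Nat.sum_divisorsAntidiagonal (fun x y => f x * g y),
    Nat.sum_divisors_prime_pow hp]
  refine sum_congr rfl fun i hi => ?_
  rw [Nat.pow_div (by simpa [Nat.lt_succ_iff] using hi) hp.pos]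

theorem moebius_onSquares_apply_prime_pow {p : ℕ} (hp : p.Prime) (i : ℕ) :
    moebius.onSquares (p ^ i) = if i = 0 then 1 else if i = 2 then -1 else 0 := by
  obtain ⟨j, rfl | rfl⟩ := Nat.even_or_odd' i
  · rw [pow_mul', onSquares_apply_sq]
    rcases j with _ | _ | j
    · simp
    · simp [moebius_apply_prime hp]
    · rw [moebius_apply_prime_pow hp (by omega)]
      simp
  · rw [onSquares_apply_of_not_isSquare _ (Nat.not_isSquare_prime_pow_of_odd hp ⟨j, rfl⟩)]
    simp only [if_neg (by omega : 2 * j + 1 ≠ 0), if_neg (by omega : 2 * j + 1 ≠ 2)]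

theorem moebius_onSquares_mul_apply_prime_pow (g : ArithmeticFunction ℤ) {p : ℕ} (hp : p.Prime)
    (a : ℕ) :
    (moebius.onSquares * g) (p ^ a)
      = g (p ^ a) - if 2 ≤ a then g (p ^ (a - 2)) else 0 := by
  rw [mul_apply_prime_pow _ _ hp]
  have hterm : ∀ i, moebius.onSquares (p ^ i) * g (p ^ (a - i))
      = (if i = 0 then g (p ^ (a - i)) else 0) - if i = 2 then g (p ^ (a - i)) else 0 := by
    intro i
    rw [moebius_onSquares_apply_prime_pow hp]
    split_ifs <;> simp_all
  simp [hterm, sum_sub_distrib, sum_ite_eq']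

theorem moebius_onSquares_mul_sigma_apply_prime_pow {j p : ℕ} (hp : p.Prime) (b : ℕ) :
    (moebius.onSquares * (σ j : ArithmeticFunction ℤ)) (p ^ (b + 1))
      = (p : ℤ) ^ (j * b) * ((p : ℤ) ^ j + 1) := by
  rw [moebius_onSquares_mul_apply_prime_pow _ hp]
  simp only [natCoe_apply, sigma_apply_prime_pow hp]
  rcases b with _ | b
  · simp [sum_range_succ, add_comm]
  · rw [if_pos (by omega), show b + 1 + 1 - 2 = b by omega]
    push_cast
    simp only [sum_range_succ, Nat.mul_comm _ j]
    ring_nf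

end ArithmeticFunction

open ArithmeticFunction

theorem gkFun_eq_moebius_onSquares_mul_sigma (k : ℕ) {m : ℕ} (hm : m ≠ 0) :
    gkFun k m = (moebius.onSquares * (σ (k - 1) : ArithmeticFunction ℤ)) m := by
  rw [onSquares_mul_apply _ _ hm, gkFun]
  refine sum_congr (ext fun d => ?_) fun d _ => rfl
  simp only [mem_filter, mem_range, Nat.mem_divisors]
  constructor
  · rintro ⟨-, -, hd⟩
    exact ⟨⟨(dvd_pow_self d two_ne_zero).trans hd, hm⟩, hd⟩
  · rintro ⟨⟨hdm, -⟩, hd⟩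
    exact ⟨Nat.lt_succ_of_le (Nat.le_of_dvd (Nat.pos_of_ne_zero hm) hdm),
      Nat.pos_of_dvd_of_pos hdm (Nat.pos_of_ne_zero hm), hd⟩

theorem statement10_general (k m : ℕ) (hm : 0 < m) :
    gkFun k m * ∏ p ∈ m.primeFactors, (p : ℤ) ^ (k - 1)
      = (m : ℤ) ^ (k - 1) * ∏ p ∈ m.primeFactors, ((p : ℤ) ^ (k - 1) + 1) := by
  have hg := isMultiplicative_moebius.onSquares.mul (isMultiplicative_sigma (k := k - 1)).natCast
  have hm_pow : (m : ℤ) ^ (k - 1)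
      = ∏ p ∈ m.primeFactors, ((p : ℤ) ^ (m.factorization p)) ^ (k - 1) := by
    rw [prod_pow]
    exact_mod_cast congrArg (· ^ (k - 1)) (Nat.prod_primeFactors_pow_factorization hm.ne')
  rw [gkFun_eq_moebius_onSquares_mul_sigma k hm.ne', hg.multiplicative_factorization _ hm.ne',
    Nat.prod_factorization_eq_prod_primeFactors, hm_pow, ← prod_mul_distrib, ← prod_mul_distrib]
  refine prod_congr rfl fun p hp => ?_
  obtain ⟨b, hb⟩ := Nat.exists_eq_add_one_of_ne_zero
    (Finsupp.mem_support_iff.1 ((Nat.support_factorization m).symm ▸ hp))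
  rw [hb, moebius_onSquares_mul_sigma_apply_prime_pow (Nat.prime_of_mem_primeFactors hp)]
  ring

/-- for `k ≥ 2` and `m > 0`,
`g_k(m) · ∏_{p∣m} p^{k−1} = m^{k−1} · ∏_{p∣m} (p^{k−1} + 1)`, the products running over
the distinct primes `p` dividing `m`. -/
theorem statement10 (k m : ℕ) (hk : 2 ≤ k) (hm : 0 < m) :
    gkFun k m * ∏ p ∈ m.primeFactors, (p : ℤ) ^ (k - 1)
      = (m : ℤ) ^ (k - 1) * ∏ p ∈ m.primeFactors, ((p : ℤ) ^ (k - 1) + 1) :=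
  statement10_general k m hm

end
end

section
/- Let p be a prime and n ≥ 2 an integer. For all nonzero complex numbers x_2, …, x_{2n−1} and every index i with 2 ≤ i ≤ 2n−1, the 2×2n matrix B'_{2,2n} is unchanged when x_i is replaced by x_i^{−1}: B'_{2,2n}(x_2, …, x_{i−1}, x_i^{−1}, x_{i+1}, …, x_{2n−1}) = B'_{2,2n}(x_2, …, x_{2n−1}). (Equivalently, every entry of B'_{2,2n}(X_2,…,X_{2n−1}) is a polynomial in the quantities X_2 + X_2^{−1}, …, X_{2n−1} + X_{2n−1}^{−1}.) -/
/-! Every entry of `B_{l,l+1}(X)` is `X` times `c`, `X + c + X⁻¹` or `0`, so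
`B_{l,l+1}(X⁻¹) = X⁻² B_{l,l+1}(X)`. Inverting `X_i` therefore scales the product
`B_{2,2n}` by `X_i⁻²`, and the normalising factor `(∏ X_j)⁻¹` by `X_i²`. -/

open Matrix

noncomputable section

/-- The coefficient `b_{t,j,l,p}(X)`. -/
def bcoef (p l t j : ℕ) (X : ℂ) : ℂ :=
  if t + 2 = j then ((p : ℂ) ^ ((2 * l : ℤ) - 2 * j + 2) - 1) * (p : ℂ) ^ ((j : ℤ) - 1 - l) * X
  else if t + 1 = j then 1 + (p : ℂ) ^ ((j : ℤ) - 1 - l) * ((p : ℂ) - 1) * X + X ^ 2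
  else if t = j then (p : ℂ) ^ ((j : ℤ) - l) * X
  else 0

/-- The `l × (l+1)` matrix `B_{l,l+1}(X) = (b_{t,j,l,p}(X))_{0≤t≤l−1, 0≤j≤l}`. -/
def Bmat (p l : ℕ) (X : ℂ) : Matrix (Fin l) (Fin (l + 1)) ℂ :=
  Matrix.of fun t j => bcoef p l (t : ℕ) (j : ℕ) X

/-- Auxiliary product: `BprodAux p X m = B_{2,3}(X 2) * B_{3,4}(X 3) * ⋯ * B_{m+2,m+3}(X (m+2))`,
a `2 × (m+3)` matrix; thus `BprodAux p X (2n−3) = B_{2,2n}(X_2,…,X_{2n−1})` for `n ≥ 2`. -/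
def BprodAux (p : ℕ) (X : ℕ → ℂ) : (m : ℕ) → Matrix (Fin 2) (Fin (m + 3)) ℂ
  | 0 => Bmat p 2 (X 2)
  | m + 1 => BprodAux p X m * Bmat p (m + 3) (X (m + 3))

/-- `B'_{2,2n}(X_2,…,X_{2n−1}) = (∏_{i=2}^{2n−1} X_i)⁻¹ · B_{2,2n}(X_2,…,X_{2n−1})`. -/
def Bprime (p n : ℕ) (X : ℕ → ℂ) : Matrix (Fin 2) (Fin (2 * n - 3 + 3)) ℂ :=
  (∏ i ∈ Finset.Icc 2 (2 * n - 1), X i)⁻¹ • BprodAux p X (2 * n - 3)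

lemma bcoef_inv (p l t j : ℕ) {X : ℂ} (hX : X ≠ 0) :
    bcoef p l t j X⁻¹ = (X ^ 2)⁻¹ * bcoef p l t j X := by
  unfold bcoef
  split_ifs <;> field_simp <;> ring

lemma bmat_inv (p l : ℕ) {X : ℂ} (hX : X ≠ 0) : Bmat p l X⁻¹ = (X ^ 2)⁻¹ • Bmat p l X := by
  ext t j
  exact bcoef_inv p l t j hX

lemma bprodAux_congr (p : ℕ) {X Y : ℕ → ℂ} (m : ℕ)
    (h : ∀ j, 2 ≤ j → j ≤ m + 2 → X j = Y j) : BprodAux p X m = BprodAux p Y m := by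
  induction m with
  | zero => simp only [BprodAux, h 2 le_rfl le_rfl]
  | succ m ih =>
    simp only [BprodAux]
    rw [ih fun j hj _ => h j hj (by omega), h (m + 3) (by omega) le_rfl]

lemma bprodAux_update_inv (p : ℕ) (X : ℕ → ℂ) {i : ℕ} (hi : 2 ≤ i) (hX : X i ≠ 0) (m : ℕ)
    (him : i ≤ m + 2) :
    BprodAux p (Function.update X i (X i)⁻¹) m = (X i ^ 2)⁻¹ • BprodAux p X m := by
  induction m with
  | zero =>
    obtain rfl : i = 2 := by omega
    simp only [BprodAux, Function.update_self]
    exact bmat_inv p 2 hX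
  | succ m ih =>
    simp only [BprodAux]
    rcases Nat.lt_or_ge i (m + 3) with hlt | hge
    · rw [ih (by omega), Function.update_of_ne (by omega), Matrix.smul_mul]
    · obtain rfl : i = m + 3 := by omega
      rw [bprodAux_congr p m fun j _ hj => Function.update_of_ne (by omega) _ _,
        Function.update_self, bmat_inv p _ hX, Matrix.mul_smul]

lemma prod_update_inv {ι G : Type*} [DecidableEq ι] [CommGroupWithZero G] {s : Finset ι}
    {i : ι} (hi : i ∈ s) (f : ι → G) :
    ∏ j ∈ s, Function.update f i (f i)⁻¹ j = (f i ^ 2)⁻¹ * ∏ j ∈ s, f j := by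
  rw [Finset.prod_update_of_mem hi, ← Finset.mul_prod_erase s f hi,
    Finset.sdiff_singleton_eq_erase, ← mul_assoc, ← div_eq_inv_mul (f i), sq, div_self_mul_self']

theorem statement12_general (p n : ℕ) (X : ℕ → ℂ)
    (hX : ∀ i, 2 ≤ i → i ≤ 2 * n - 1 → X i ≠ 0)
    (i₀ : ℕ) (h1 : 2 ≤ i₀) (h2 : i₀ ≤ 2 * n - 1) :
    Bprime p n (Function.update X i₀ (X i₀)⁻¹) = Bprime p n X := by
  have hX₀ : X i₀ ≠ 0 := hX i₀ h1 h2
  unfold Bprime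
  rw [bprodAux_update_inv p X h1 hX₀ _ (by omega),
    prod_update_inv (Finset.mem_Icc.mpr ⟨h1, h2⟩), smul_smul, mul_inv, inv_inv,
    mul_right_comm, mul_inv_cancel₀ (pow_ne_zero 2 hX₀), one_mul]

/-- for a prime `p`, `n ≥ 2`, nonzero complex numbers `x_2, …, x_{2n−1}`
and any index `2 ≤ i₀ ≤ 2n−1`, the matrix `B'_{2,2n}` is unchanged when `x_{i₀}` is
replaced by `x_{i₀}⁻¹`. -/
theorem statement12 (p n : ℕ) (hp : p.Prime) (hn : 2 ≤ n) (X : ℕ → ℂ)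
    (hX : ∀ i, 2 ≤ i → i ≤ 2 * n - 1 → X i ≠ 0)
    (i₀ : ℕ) (h1 : 2 ≤ i₀) (h2 : i₀ ≤ 2 * n - 1) :
    Bprime p n (Function.update X i₀ (X i₀)⁻¹) = Bprime p n X :=
  statement12_general p n X hX i₀ h1 h2

end
end

section
/- Let p be a prime, n ≥ 1, and 0 ≤ i ≤ j ≤ n. The map A ↦ block-diag(A, ᵗA^{−1}) from GL_n(ℤ) into Γ_{n,0} induces a well-defined bijection from the left coset space H_{i,j}\GL_n(ℤ) onto the left coset space Γ(δ_{i,j})\Γ_{n,0}. Equivalently, if {A_l}_l is a complete set of representatives of H_{i,j}\GL_n(ℤ), then {block-diag(A_l, ᵗA_l^{−1})}_l is a complete set of representatives of Γ(δ_{i,j})\Γ_{n,0}. -/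
open Matrix

noncomputable section

/-- The matrix `J_n = (0, −1_n; 1_n, 0)`. -/
def Jmat (n : ℕ) : Matrix (Fin n ⊕ Fin n) (Fin n ⊕ Fin n) ℤ :=
  Matrix.fromBlocks 0 (-1) 1 0

/-- The integral symplectic group `Sp_n(ℤ)`: matrices `M` with `M Jₙ ᵗM = Jₙ`. -/
def SpSet (n : ℕ) : Set (Matrix (Fin n ⊕ Fin n) (Fin n ⊕ Fin n) ℤ) :=
  {M | M * Jmat n * Mᵀ = Jmat n}

/-- `Γ_{n,0}`: the elements of `Sp_n(ℤ)` whose lower-left `n × n` block vanishes. -/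
def Gamma0 (n : ℕ) : Set (Matrix (Fin n ⊕ Fin n) (Fin n ⊕ Fin n) ℤ) :=
  {M | M ∈ SpSet n ∧ M.toBlocks₂₁ = 0}

/-- `Γ(δ_{i,j})`: the elements of `Γ_{n,0}` whose upper-left block lies in
`δ_{i,j} GL_n(ℤ) δ_{i,j}⁻¹`. -/
def GammaDelta (p : ℕ) (hp : p.Prime) (n i j : ℕ) :
    Set (Matrix (Fin n ⊕ Fin n) (Fin n ⊕ Fin n) ℤ) :=
  {M | M ∈ Gamma0 n ∧ ∃ U : (Matrix (Fin n) (Fin n) ℤ)ˣ,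
    (M.toBlocks₁₁).map ((↑) : ℤ → ℚ)
      = ((deltaU p hp n i j) * glMap n U * (deltaU p hp n i j)⁻¹
          : (Matrix (Fin n) (Fin n) ℚ)ˣ).val}

/-- The map `A ↦ block-diag(A, ᵗA⁻¹)`. -/
def blockDiagMap {n : ℕ} (A : (Matrix (Fin n) (Fin n) ℤ)ˣ) :
    Matrix (Fin n ⊕ Fin n) (Fin n ⊕ Fin n) ℤ :=
  Matrix.fromBlocks A.val 0 0 ((A⁻¹).val)ᵀ

lemma blockDiagMap_mul {n : ℕ} (A B : (Matrix (Fin n) (Fin n) ℤ)ˣ) :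
    blockDiagMap (A * B) = blockDiagMap A * blockDiagMap B := by
  simp [blockDiagMap, Matrix.fromBlocks_multiply, _root_.mul_inv_rev, Matrix.transpose_mul]

lemma blockDiagMap_one {n : ℕ} : blockDiagMap (1 : (Matrix (Fin n) (Fin n) ℤ)ˣ) = 1 := by
  simp [blockDiagMap, ← Matrix.fromBlocks_one]

lemma blockDiag_mem_Gamma0 {n : ℕ} (A : (Matrix (Fin n) (Fin n) ℤ)ˣ) :
    blockDiagMap A ∈ Gamma0 n := by
  refine ⟨?_, by simp [blockDiagMap]⟩
  show _ * _ * _ = _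
  have h1 : A.val * (A.val)⁻¹ = 1 := by
    rw [← Matrix.coe_units_inv]; exact A.mul_inv
  have h2 : ((A.val)⁻¹)ᵀ * (A.val)ᵀ = 1 := by
    rw [← Matrix.transpose_mul, h1, Matrix.transpose_one]
  simp [blockDiagMap, Jmat, Matrix.fromBlocks_transpose, Matrix.fromBlocks_multiply,
    h1, h2]

lemma Gamma0_mul {n : ℕ} {M N : Matrix (Fin n ⊕ Fin n) (Fin n ⊕ Fin n) ℤ}
    (hM : M ∈ Gamma0 n) (hN : N ∈ Gamma0 n) : M * N ∈ Gamma0 n := by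
  obtain ⟨hM1, hM2⟩ := hM
  obtain ⟨hN1, hN2⟩ := hN
  constructor
  · show M * N * Jmat n * (M * N)ᵀ = Jmat n
    calc M * N * Jmat n * (M * N)ᵀ = M * (N * Jmat n * Nᵀ) * Mᵀ := by
          rw [Matrix.transpose_mul]; simp only [mul_assoc]
      _ = Jmat n := by rw [hN1, hM1]
  · have : M * N = Matrix.fromBlocks M.toBlocks₁₁ M.toBlocks₁₂ M.toBlocks₂₁ M.toBlocks₂₂
        * Matrix.fromBlocks N.toBlocks₁₁ N.toBlocks₁₂ N.toBlocks₂₁ N.toBlocks₂₂ := by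
      rw [Matrix.fromBlocks_toBlocks, Matrix.fromBlocks_toBlocks]
    rw [this, Matrix.fromBlocks_multiply]
    simp [hM2, hN2]

lemma toBlocks₁₁_mul_blockDiag {n : ℕ} (M : Matrix (Fin n ⊕ Fin n) (Fin n ⊕ Fin n) ℤ)
    (A : (Matrix (Fin n) (Fin n) ℤ)ˣ) :
    (M * blockDiagMap A).toBlocks₁₁ = M.toBlocks₁₁ * A.val := by
  conv_lhs => rw [← Matrix.fromBlocks_toBlocks M]
  simp [blockDiagMap, Matrix.fromBlocks_multiply]

/-- Block relations for an element of `Γ_{n,0}`. -/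
lemma gamma0_blocks {n : ℕ} {M : Matrix (Fin n ⊕ Fin n) (Fin n ⊕ Fin n) ℤ}
    (hM : M ∈ Gamma0 n) :
    M.toBlocks₁₁ * (M.toBlocks₂₂)ᵀ = 1 ∧ (M.toBlocks₂₂)ᵀ * M.toBlocks₁₁ = 1 := by
  obtain ⟨h1, h2⟩ := hM
  have hE : Matrix.fromBlocks M.toBlocks₁₁ M.toBlocks₁₂ M.toBlocks₂₁ M.toBlocks₂₂
      * Jmat n * (Matrix.fromBlocks M.toBlocks₁₁ M.toBlocks₁₂ M.toBlocks₂₁ M.toBlocks₂₂)ᵀ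
      = Jmat n := by rw [Matrix.fromBlocks_toBlocks]; exact h1
  rw [h2] at hE
  rw [Jmat, Matrix.fromBlocks_transpose, Matrix.fromBlocks_multiply,
    Matrix.fromBlocks_multiply] at hE
  have h12 := congrArg Matrix.toBlocks₁₂ hE
  simp [Matrix.toBlocks_fromBlocks₁₂] at h12
  have hAD : M.toBlocks₁₁ * (M.toBlocks₂₂)ᵀ = 1 := by
    have := congrArg Neg.neg h12
    simpa using this
  exact ⟨hAD, mul_eq_one_comm.mp hAD⟩

lemma glMap_val {n : ℕ} (B : (Matrix (Fin n) (Fin n) ℤ)ˣ) :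
    (glMap n B).val = (B.val).map ((↑) : ℤ → ℚ) := by
  simp [glMap, RingHom.mapMatrix_apply]

lemma mem_Hij_iff_s14 {p : ℕ} {hp : p.Prime} {n i j : ℕ} (B : (Matrix (Fin n) (Fin n) ℤ)ˣ) :
    B ∈ Hij p hp n i j ↔ ∃ U : (Matrix (Fin n) (Fin n) ℤ)ˣ,
      glMap n B = deltaU p hp n i j * glMap n U * (deltaU p hp n i j)⁻¹ := by
  constructor
  · rintro hB
    obtain ⟨x, ⟨U, rfl⟩, hx⟩ := hB
    exact ⟨U, by simpa [MulAut.conj_apply] using hx.symm⟩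
  · rintro ⟨U, hU⟩
    exact ⟨glMap n U, ⟨U, rfl⟩, by simpa [MulAut.conj_apply] using hU.symm⟩

/-- the map `A ↦ block-diag(A, ᵗA⁻¹)` sends `GL_n(ℤ)` into `Γ_{n,0}`, and
if `X` is a complete set of representatives of `H_{i,j}\GL_n(ℤ)`, then
`{block-diag(A, ᵗA⁻¹) : A ∈ X}` is a complete set of representatives of
`Γ(δ_{i,j})\Γ_{n,0}`: every `M ∈ Γ_{n,0}` can be written as `M = γ · block-diag(A, ᵗA⁻¹)`
with `γ ∈ Γ(δ_{i,j})` for exactly one `A ∈ X`. -/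
theorem statement14 (p n i j : ℕ) (hp : p.Prime) (hn : 1 ≤ n) (hij : i ≤ j) (hj : j ≤ n) :
    (∀ A : (Matrix (Fin n) (Fin n) ℤ)ˣ, blockDiagMap A ∈ Gamma0 n) ∧
    (∀ X : Set (Matrix (Fin n) (Fin n) ℤ)ˣ,
      (∀ B : (Matrix (Fin n) (Fin n) ℤ)ˣ, ∃! A, A ∈ X ∧ B * A⁻¹ ∈ Hij p hp n i j) →
      ∀ M ∈ Gamma0 n, ∃! A, A ∈ X ∧
        ∃ γ ∈ GammaDelta p hp n i j, M = γ * blockDiagMap A) := by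
  refine ⟨blockDiag_mem_Gamma0, ?_⟩
  intro X hX M hM
  obtain ⟨hAD, hDA⟩ := gamma0_blocks hM
  set B0 : (Matrix (Fin n) (Fin n) ℤ)ˣ := ⟨M.toBlocks₁₁, (M.toBlocks₂₂)ᵀ, hAD, hDA⟩ with hB0
  obtain ⟨A, ⟨hAX, hAH⟩, hAu⟩ := hX B0
  have key : ∀ A' : (Matrix (Fin n) (Fin n) ℤ)ˣ,
      ((M * blockDiagMap A'⁻¹).toBlocks₁₁).map ((↑) : ℤ → ℚ) = (glMap n (B0 * A'⁻¹)).val := by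
    intro A'
    rw [toBlocks₁₁_mul_blockDiag, glMap_val, Units.val_mul]
  have inv_cancel : ∀ A' : (Matrix (Fin n) (Fin n) ℤ)ˣ,
      (M * blockDiagMap A'⁻¹) * blockDiagMap A' = M := by
    intro A'
    rw [mul_assoc, ← blockDiagMap_mul, inv_mul_cancel, blockDiagMap_one, mul_one]
  refine ⟨A, ⟨hAX, M * blockDiagMap A⁻¹, ⟨?_, ?_⟩, (inv_cancel A).symm⟩, ?_⟩
  · exact Gamma0_mul hM (blockDiag_mem_Gamma0 A⁻¹)
  · obtain ⟨U, hU⟩ := (mem_Hij_iff_s14 (B0 * A⁻¹)).mp hAH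
    exact ⟨U, by rw [key A, hU]⟩
  · rintro A' ⟨hA'X, γ', ⟨hγ'0, U, hU⟩, hMeq⟩
    refine hAu A' ⟨hA'X, ?_⟩
    have hγ' : γ' = M * blockDiagMap A'⁻¹ := by
      rw [hMeq, mul_assoc, ← blockDiagMap_mul, mul_inv_cancel, blockDiagMap_one, mul_one]
    rw [hγ', key A'] at hU
    exact (mem_Hij_iff_s14 (B0 * A'⁻¹)).mpr ⟨U, Units.ext hU⟩

end
end
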